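/- arXiv:1305.6541 — 8 statements merged into one kernel-verified Lean document; each statement's English description precedes it below -/
import Mathlib

section
/- A positive progressively measurable process η (with η_t and η_t/η_s integrable for all 0≤s≤t<T) has uncorrelated multiplicative increments if and only if the normalized process M_t = η_t/E[η_t], t∈[0,T), is a martingale with respect to (F_t). -/
/-!
Since `η_s` is `ℱ_s`-measurable and positive, `E[η_t/η_s | ℱ_s] = E[η_t | ℱ_s] / η_s`. Hence both
conditions say that `E[η_t | ℱ_s] = c η_s` for a constant `c`, and taking expectations forces
`c = E[η_t] / E[η_s]`.
-/

open MeasureTheory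

namespace MeasureTheory

variable {Ω : Type*} {m m0 : MeasurableSpace Ω} {P : Measure Ω}

lemma integral_pos_of_forall_pos [NeZero P] {f : Ω → ℝ} (hf : ∀ ω, 0 < f ω)
    (hfi : Integrable f P) : 0 < ∫ ω, f ω ∂P := by
  rw [integral_pos_iff_support_of_nonneg (fun ω => (hf ω).le) hfi,
    show Function.support f = Set.univ from Set.eq_univ_of_forall fun ω => (hf ω).ne']
  simpa using NeZero.ne P

lemma condExp_div_const (Y : Ω → ℝ) (c : ℝ) :
    P[fun ω => Y ω / c | m] =ᵐ[P] fun ω => P[Y | m] ω / c := by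
  have hsmul : (fun ω => Y ω / c) = c⁻¹ • Y := by
    ext ω
    simp [div_eq_inv_mul]
  filter_upwards [hsmul ▸ condExp_smul (μ := P) c⁻¹ Y m] with ω h
  rw [h, Pi.smul_apply, smul_eq_mul, div_eq_inv_mul]

lemma condExp_div_of_stronglyMeasurable_right {X Y : Ω → ℝ} (hX : StronglyMeasurable[m] X)
    (hYX : Integrable (fun ω => Y ω / X ω) P) (hY : Integrable Y P) :
    P[fun ω => Y ω / X ω | m] =ᵐ[P] fun ω => P[Y | m] ω / X ω := by
  have hdiv : X⁻¹ * Y = fun ω => Y ω / X ω := by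
    ext ω
    exact inv_mul_eq_div _ _
  have hpull := condExp_mul_of_stronglyMeasurable_left (μ := P)
    hX.measurable.inv.stronglyMeasurable (hdiv ▸ hYX) hY
  filter_upwards [hdiv ▸ hpull] with ω h
  rw [h, Pi.mul_apply, Pi.inv_apply, inv_mul_eq_div]

lemma condExp_div_ae_eq_const_iff {X Y : Ω → ℝ} (hX : StronglyMeasurable[m] X)
    (hX0 : ∀ ω, X ω ≠ 0) (hYX : Integrable (fun ω => Y ω / X ω) P) (hY : Integrable Y P)
    (a : ℝ) :
    (P[fun ω => Y ω / X ω | m] =ᵐ[P] fun _ => a) ↔ P[Y | m] =ᵐ[P] fun ω => a * X ω := by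
  have hdiv := condExp_div_of_stronglyMeasurable_right hX hYX hY
  constructor
  · intro h
    filter_upwards [hdiv, h] with ω h₁ h₂
    exact (div_eq_iff (hX0 ω)).1 (h₁ ▸ h₂)
  · intro h
    filter_upwards [hdiv, h] with ω h₁ h₂
    rw [h₁, h₂, mul_div_cancel_right₀ _ (hX0 ω)]

lemma condExp_div_const_ae_eq_iff {X Y : Ω → ℝ} {c d : ℝ} (hc : c ≠ 0) (hd : d ≠ 0) :
    (P[fun ω => Y ω / c | m] =ᵐ[P] fun ω => X ω / d) ↔
      P[Y | m] =ᵐ[P] fun ω => c / d * X ω := by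
  have hdiv := condExp_div_const (P := P) (m := m) Y c
  constructor
  · intro h
    filter_upwards [hdiv, h] with ω h₁ h₂
    rw [h₁] at h₂
    field_simp at h₂ ⊢
    linarith
  · intro h
    filter_upwards [hdiv, h] with ω h₁ h₂
    rw [h₁, h₂]
    field_simp

lemma eq_integral_of_condExp_ae_eq_const [IsProbabilityMeasure P] (hm : m ≤ m0) {f : Ω → ℝ}
    {a : ℝ} (h : P[f | m] =ᵐ[P] fun _ => a) : a = ∫ ω, f ω ∂P := by
  calc a = ∫ _, a ∂P := by simp
    _ = ∫ ω, P[f | m] ω ∂P := integral_congr_ae h.symm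
    _ = ∫ ω, f ω ∂P := integral_condExp hm

lemma eq_div_integral_of_condExp_ae_eq_const_mul (hm : m ≤ m0) [SigmaFinite (P.trim hm)]
    {X Y : Ω → ℝ} {a : ℝ} (h : P[Y | m] =ᵐ[P] fun ω => a * X ω) (hX : ∫ ω, X ω ∂P ≠ 0) :
    a = (∫ ω, Y ω ∂P) / ∫ ω, X ω ∂P := by
  rw [eq_div_iff hX, ← integral_const_mul]
  calc ∫ ω, a * X ω ∂P = ∫ ω, P[Y | m] ω ∂P := integral_congr_ae h.symm
    _ = ∫ ω, Y ω ∂P := integral_condExp hm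

lemma condExp_div_ae_eq_integral_iff [IsProbabilityMeasure P] (hm : m ≤ m0) {X Y : Ω → ℝ}
    (hX : StronglyMeasurable[m] X) (hXpos : ∀ ω, 0 < X ω) (hYpos : ∀ ω, 0 < Y ω)
    (hXi : Integrable X P) (hYi : Integrable Y P) (hYX : Integrable (fun ω => Y ω / X ω) P) :
    (P[fun ω => Y ω / X ω | m] =ᵐ[P] fun _ => ∫ ω, Y ω / X ω ∂P) ↔
      P[fun ω => Y ω / ∫ ω', Y ω' ∂P | m] =ᵐ[P] fun ω => X ω / ∫ ω', X ω' ∂P := by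
  have hXint := (integral_pos_of_forall_pos hXpos hXi).ne'
  have hratio := condExp_div_ae_eq_const_iff hX (fun ω => (hXpos ω).ne') hYX hYi
  calc (P[fun ω => Y ω / X ω | m] =ᵐ[P] fun _ => ∫ ω, Y ω / X ω ∂P)
      ↔ P[Y | m] =ᵐ[P] fun ω => (∫ ω', Y ω' ∂P) / (∫ ω', X ω' ∂P) * X ω := by
        rw [hratio]
        constructor
        · intro h
          rwa [eq_div_integral_of_condExp_ae_eq_const_mul hm h hXint] at h
        · intro h
          rwa [← eq_integral_of_condExp_ae_eq_const hm ((hratio _).2 h)]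
    _ ↔ _ := (condExp_div_const_ae_eq_iff (integral_pos_of_forall_pos hYpos hYi).ne' hXint).symm

end MeasureTheory

theorem uncorrelated_multiplicative_increments_iff_normalized_martingale_general
    {Ω : Type*} {m0 : MeasurableSpace Ω} (P : Measure Ω) [IsProbabilityMeasure P]
    (ℱ : Filtration ℝ m0) (T : ℝ)
    (η : ℝ → Ω → ℝ) (hηprog : ProgMeasurable ℱ η)
    (hpos : ∀ t ω, 0 < η t ω)
    (hint : ∀ t, 0 ≤ t → t < T → Integrable (η t) P)
    (hratio : ∀ s t, 0 ≤ s → s ≤ t → t < T → Integrable (fun ω => η t ω / η s ω) P) :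
    (∀ s t, 0 ≤ s → s ≤ t → t < T →
        P[fun ω => η t ω / η s ω | ℱ s] =ᵐ[P] fun _ => ∫ ω, η t ω / η s ω ∂P)
      ↔
    ((∀ t, 0 ≤ t → t < T → Integrable (fun ω => η t ω / ∫ ω', η t ω' ∂P) P) ∧
     (∀ t, 0 ≤ t → t < T → StronglyMeasurable[ℱ t] (fun ω => η t ω / ∫ ω', η t ω' ∂P)) ∧
     (∀ s t, 0 ≤ s → s ≤ t → t < T →
        P[fun ω => η t ω / ∫ ω', η t ω' ∂P | ℱ s]
          =ᵐ[P] fun ω => η s ω / ∫ ω', η s ω' ∂P)) := by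
  have hstep : ∀ s t, 0 ≤ s → s ≤ t → t < T →
      ((P[fun ω => η t ω / η s ω | ℱ s] =ᵐ[P] fun _ => ∫ ω, η t ω / η s ω ∂P) ↔
        P[fun ω => η t ω / ∫ ω', η t ω' ∂P | ℱ s] =ᵐ[P] fun ω => η s ω / ∫ ω', η s ω' ∂P) :=
    fun s t hs hst ht =>
      condExp_div_ae_eq_integral_iff (ℱ.le s) (IsStronglyProgressive.stronglyAdapted hηprog s) (hpos s) (hpos t)
        (hint s hs (hst.trans_lt ht)) (hint t (hs.trans hst) ht) (hratio s t hs hst ht)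
  refine ⟨fun h => ⟨fun t ht ht' => (hint t ht ht').div_const _,
    fun t _ _ => ((StronglyMeasurable.measurable
      (IsStronglyProgressive.stronglyAdapted hηprog t)).div_const _).stronglyMeasurable,
    fun s t hs hst ht => (hstep s t hs hst ht).1 (h s t hs hst ht)⟩,
    fun h s t hs hst ht => (hstep s t hs hst ht).2 (h.2.2 s t hs hst ht)⟩

/-- a positive progressively measurable process `η` (with `η_t` and `η_t/η_s`
integrable for `0 ≤ s ≤ t < T`) has uncorrelated multiplicative increments, i.e.
`E[η_t/η_s | F_s] = E[η_t/η_s]` a.s. for all `0 ≤ s ≤ t < T`, if and only if the normalized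
process `M_t = η_t / E[η_t]`, `t ∈ [0,T)`, is a martingale with respect to `(F_t)`
(adapted, integrable, with the martingale property). -/
theorem uncorrelated_multiplicative_increments_iff_normalized_martingale
    {Ω : Type*} {m0 : MeasurableSpace Ω} (P : Measure Ω) [IsProbabilityMeasure P]
    (ℱ : Filtration ℝ m0) (T : ℝ) (hT : 0 < T)
    (η : ℝ → Ω → ℝ) (hηprog : ProgMeasurable ℱ η)
    (hpos : ∀ t ω, 0 < η t ω)
    (hint : ∀ t, 0 ≤ t → t < T → Integrable (η t) P)
    (hratio : ∀ s t, 0 ≤ s → s ≤ t → t < T → Integrable (fun ω => η t ω / η s ω) P) :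
    (∀ s t, 0 ≤ s → s ≤ t → t < T →
        P[fun ω => η t ω / η s ω | ℱ s] =ᵐ[P] fun _ => ∫ ω, η t ω / η s ω ∂P)
      ↔
    ((∀ t, 0 ≤ t → t < T → Integrable (fun ω => η t ω / ∫ ω', η t ω' ∂P) P) ∧
     (∀ t, 0 ≤ t → t < T → StronglyMeasurable[ℱ t] (fun ω => η t ω / ∫ ω', η t ω' ∂P)) ∧
     (∀ s t, 0 ≤ s → s ≤ t → t < T →
        P[fun ω => η t ω / ∫ ω', η t ω' ∂P | ℱ s]
          =ᵐ[P] fun ω => η s ω / ∫ ω', η s ω' ∂P)) :=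
  uncorrelated_multiplicative_increments_iff_normalized_martingale_general P ℱ T η hηprog hpos hint
    hratio
end

section
/- Assume γ ≡ 0 and let η be a positive progressively measurable process with uncorrelated multiplicative increments satisfying E[∫_0^T η_t^2 dt] < ∞, E[∫_0^T η_t^{1-q} dt] < ∞ and E[η_T^2] < ∞, and let ξ > 0. If the map t ↦ E[η_t] is nondecreasing (respectively nonincreasing) on [0,T], then the optimal deterministic control x_t = ξ·(∫_t^T E[η_s]^{1-q} ds)/(∫_0^T E[η_s]^{1-q} ds) is a convex (respectively concave) function of t on [0,T]. -/
open MeasureTheory Set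
open scoped ENNReal

/-- If `g` is antitone on `[0,T]`, then `t ↦ ∫_t^T g` is convex on `[0,T]`. -/
lemma convexOn_integral_to_T_of_antitoneOn {T : ℝ} {g : ℝ → ℝ}
    (hg : AntitoneOn g (Set.Icc 0 T)) :
    ConvexOn ℝ (Set.Icc 0 T) (fun t => ∫ s in t..T, g s) := by
  have hII : ∀ u v : ℝ, u ∈ Set.Icc 0 T → v ∈ Set.Icc 0 T → u ≤ v →
      IntervalIntegrable g volume u v := by
    intro u v hu hv huv
    apply AntitoneOn.intervalIntegrable
    rw [Set.uIcc_of_le huv]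
    exact hg.mono (Set.Icc_subset_Icc hu.1 hv.2)
  refine convexOn_of_slope_mono_adjacent (convex_Icc 0 T) ?_
  intro a b c ha hc hab hbc
  have hb : b ∈ Set.Icc 0 T := ⟨le_trans ha.1 hab.le, le_trans hbc.le hc.2⟩
  have hIab := hII a b ha hb hab.le
  have hIbc := hII b c hb hc hbc.le
  have hIbT := hII b T hb ⟨le_trans hb.1 hb.2, le_refl T⟩ hb.2
  have hIcT := hII c T hc ⟨le_trans hc.1 hc.2, le_refl T⟩ hc.2
  have e1 : (∫ s in b..T, g s) - (∫ s in a..T, g s) = -∫ s in a..b, g s := by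
    have := intervalIntegral.integral_add_adjacent_intervals hIab hIbT
    linarith [this]
  have e2 : (∫ s in c..T, g s) - (∫ s in b..T, g s) = -∫ s in b..c, g s := by
    have := intervalIntegral.integral_add_adjacent_intervals hIbc hIcT
    linarith [this]
  -- lower bound on ∫_a^b g
  have l1 : (b - a) * g b ≤ ∫ s in a..b, g s := by
    have : ∫ s in a..b, (fun _ => g b) s ≤ ∫ s in a..b, g s := by
      refine intervalIntegral.integral_mono_on hab.le
        intervalIntegrable_const hIab ?_
      intro s hs
      exact hg ⟨le_trans ha.1 hs.1, le_trans hs.2 hb.2⟩ hb hs.2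
    simpa [smul_eq_mul] using this
  -- upper bound on ∫_b^c g
  have l2 : (∫ s in b..c, g s) ≤ (c - b) * g b := by
    have : ∫ s in b..c, g s ≤ ∫ s in b..c, (fun _ => g b) s := by
      refine intervalIntegral.integral_mono_on hbc.le hIbc
        intervalIntegrable_const ?_
      intro s hs
      exact hg hb ⟨le_trans hb.1 hs.1, le_trans hs.2 hc.2⟩ hs.1
    simpa [smul_eq_mul] using this
  rw [e1, e2]
  rw [div_le_div_iff₀ (by linarith) (by linarith)]
  nlinarith [l1, l2, sub_pos.2 hab, sub_pos.2 hbc]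

/-- under the assumptions of Statement 5 and with `ξ > 0`, if `t ↦ E[η_t]` is
nondecreasing (resp. nonincreasing) on `[0,T]`, then the optimal deterministic control
`x_t = ξ·(∫_t^T E[η_s]^{1-q} ds)/(∫_0^T E[η_s]^{1-q} ds)` is convex (resp. concave) on
`[0,T]`. -/
theorem optimal_control_convex_concave
    {Ω : Type*} {m0 : MeasurableSpace Ω} (P : Measure Ω) [IsProbabilityMeasure P]
    (ℱ : Filtration ℝ m0) (T p q : ℝ) (hT : 0 < T) (hp : 1 < p) (hq : q = p / (p - 1))
    (η : ℝ → Ω → ℝ) (hηprog : ProgMeasurable ℱ η)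
    (hpos : ∀ t ω, 0 < η t ω)
    (hint : ∀ t, 0 ≤ t → t ≤ T → Integrable (η t) P)
    (hratio : ∀ s t, 0 ≤ s → s ≤ t → t < T → Integrable (fun ω => η t ω / η s ω) P)
    (humi : ∀ s t, 0 ≤ s → s ≤ t → t < T →
      P[fun ω => η t ω / η s ω | ℱ s] =ᵐ[P] fun _ => ∫ ω, η t ω / η s ω ∂P)
    (hη2 : ∫⁻ ω, (∫⁻ t in Set.Ioc (0 : ℝ) T, ENNReal.ofReal ((η t ω) ^ 2)) ∂P < ⊤)
    (hηq : ∫⁻ ω, (∫⁻ t in Set.Ioc (0 : ℝ) T, ENNReal.ofReal (η t ω ^ (1 - q))) ∂P < ⊤)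
    (hηT : ∫⁻ ω, ENNReal.ofReal ((η T ω) ^ 2) ∂P < ⊤)
    (ξ : ℝ) (hξ : 0 < ξ) (x : ℝ → ℝ)
    (hxdef : ∀ t, x t = ξ * (∫ s in t..T, (∫ ω', η s ω' ∂P) ^ (1 - q)) /
      ∫ s in (0 : ℝ)..T, (∫ ω', η s ω' ∂P) ^ (1 - q)) :
    (MonotoneOn (fun t => ∫ ω, η t ω ∂P) (Set.Icc 0 T) →
      ConvexOn ℝ (Set.Icc 0 T) x) ∧
    (AntitoneOn (fun t => ∫ ω, η t ω ∂P) (Set.Icc 0 T) →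
      ConcaveOn ℝ (Set.Icc 0 T) x) := by
  set f : ℝ → ℝ := fun t => ∫ ω, η t ω ∂P with hf
  set g : ℝ → ℝ := fun t => f t ^ (1 - q) with hgdef
  -- basic facts
  have hq1 : 1 < q := by
    rw [hq, lt_div_iff₀ (by linarith)]
    linarith
  have h1q : 1 - q < 0 := by linarith
  have hfpos : ∀ s ∈ Set.Icc (0 : ℝ) T, 0 < f s := by
    intro s hs
    have hI := hint s hs.1 hs.2
    have : 0 < ∫ ω, η s ω ∂P := by
      rw [MeasureTheory.integral_pos_iff_support_of_nonneg
        (fun ω => (hpos s ω).le) hI]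
      have hsupp : Function.support (η s) = Set.univ := by
        ext ω; simp [Function.support, (hpos s ω).ne']
      rw [hsupp]
      simp
    exact this
  have hgpos : ∀ s ∈ Set.Icc (0 : ℝ) T, 0 < g s := fun s hs =>
    Real.rpow_pos_of_pos (hfpos s hs) _
  set C : ℝ := ∫ s in (0:ℝ)..T, g s with hC
  have hx : x = fun t => (ξ / C) * ∫ s in t..T, g s := by
    funext t
    rw [hxdef t]
    ring
  constructor
  · -- monotone case
    intro hmono
    have hganti : AntitoneOn g (Set.Icc 0 T) := by
      intro s hs t ht hst
      exact Real.rpow_le_rpow_of_nonpos (hfpos s hs) (hmono hs ht hst) h1q.le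
    have hCpos : 0 < C := by
      refine intervalIntegral.intervalIntegral_pos_of_pos_on ?_ ?_ hT
      · apply AntitoneOn.intervalIntegrable
        rwa [Set.uIcc_of_le hT.le]
      · intro s hs
        exact hgpos s ⟨hs.1.le, hs.2.le⟩
    rw [hx]
    have := (convexOn_integral_to_T_of_antitoneOn hganti).smul
      (c := ξ / C) (div_nonneg hξ.le hCpos.le)
    simpa [smul_eq_mul] using this
  · -- antitone case
    intro hanti
    have hgmono : MonotoneOn g (Set.Icc 0 T) := by
      intro s hs t ht hst
      exact Real.rpow_le_rpow_of_nonpos (hfpos t ht) (hanti hs ht hst) h1q.le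
    have hCpos : 0 < C := by
      refine intervalIntegral.intervalIntegral_pos_of_pos_on ?_ ?_ hT
      · apply MonotoneOn.intervalIntegrable
        rwa [Set.uIcc_of_le hT.le]
      · intro s hs
        exact hgpos s ⟨hs.1.le, hs.2.le⟩
    -- -x is convex
    have hnegganti : AntitoneOn (fun s => -g s) (Set.Icc 0 T) := by
      intro s hs t ht hst
      simpa using hgmono hs ht hst
    have hconv := (convexOn_integral_to_T_of_antitoneOn hnegganti).smul
      (c := ξ / C) (div_nonneg hξ.le hCpos.le)
    have hxneg : (fun t => (ξ / C) • ∫ s in t..T, -g s) = fun t => -x t := by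
      funext t
      rw [hx]
      simp only [intervalIntegral.integral_neg, smul_eq_mul]
      ring
    rw [hxneg] at hconv
    exact neg_convexOn_iff.mp hconv
end

section
/- Assume γ ≡ 0 and let η be a positive martingale on [0,T] with E[∫_0^T η_t^{1-q} dt] < ∞ and E[η_T^2] < ∞. Then for every initial value ξ ∈ ℝ the control with constant closure rate x_t = ξ·(1 − t/T) is admissible and optimal: J(x) ≤ J(y) for every y ∈ A_0(ξ), and J(x) = |ξ|^p·E[η_0]·T^{1-p}. -/
open MeasureTheory Set
open scoped ENNReal Classical

noncomputable section

/-- The cost functional `J(x) = E[∫_0^T (η_t |u_t|^p + γ_t |x_t|^p) dt]`, valued in `[0,∞]`,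
where `u` is the pathwise derivative of the control `x`. -/
def cost {Ω : Type*} [MeasurableSpace Ω] (P : Measure Ω) (T p : ℝ)
    (η γ : ℝ → Ω → ℝ) (x u : ℝ → Ω → ℝ) : ℝ≥0∞ :=
  ∫⁻ ω, (∫⁻ t in Set.Ioc (0 : ℝ) T,
    ENNReal.ofReal (η t ω * |u t ω| ^ p + γ t ω * |x t ω| ^ p)) ∂P

/-- `x` is a control with initial value `ξ` and (pathwise) derivative `u`:
`x` and `u` are progressively measurable, the paths of `x` are absolutely continuous with
`x_t = ξ + ∫_0^t u_s ds` on `[0,T]`. -/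
def IsControl {Ω : Type*} {m0 : MeasurableSpace Ω} (ℱ : Filtration ℝ m0)
    (T ξ : ℝ) (x u : ℝ → Ω → ℝ) : Prop :=
  ProgMeasurable ℱ u ∧ ProgMeasurable ℱ x ∧
  (∀ ω, IntegrableOn (fun s => u s ω) (Set.Icc 0 T)) ∧
  (∀ ω, ∀ t ∈ Set.Icc (0 : ℝ) T, x t ω = ξ + ∫ s in (0 : ℝ)..t, u s ω)

/-- An admissible control: a control with initial value `ξ` satisfying `x_T = 0` a.s. -/
def IsAdmissible {Ω : Type*} {m0 : MeasurableSpace Ω} (ℱ : Filtration ℝ m0)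
    (P : Measure Ω) (T ξ : ℝ) (x u : ℝ → Ω → ℝ) : Prop :=
  IsControl ℱ T ξ x u ∧ ∀ᵐ ω ∂P, x T ω = 0

/-!
Let `c = -ξ/T` be the rate of the linear control. By convexity, `|v|^p ≥ |c|^p + K (v - c)` with
`K` the slope of `|·|^p` at `c`, so for an admissible `y` with rate `w` the cost is at least
`E ∫₀ᵀ η_t (|c|^p + K (w_t - c)) dt`. Since `η_t = E[η_T | F_t]` and the integrand is
`F_t`-measurable, `η_t` may be replaced by `η_T`, which factors out of the time integral; then
`∫₀ᵀ w_t dt = -ξ = cT` cancels the `K`-term, leaving `T |c|^p E[η_T]`, which is exactly the cost of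
the linear control.
-/

open Filter

theorem rpow_add_mul_sub_le_abs_rpow {p c : ℝ} (hp : 1 ≤ p) (hc : 0 < c) (v : ℝ) :
    c ^ p + p * c ^ (p - 1) * (v - c) ≤ |v| ^ p := by
  have hcp : c ^ (p - 1) * c = c ^ p := by
    rw [Real.rpow_sub_one hc.ne', div_mul_cancel₀ _ hc.ne']
  rcases lt_or_ge v 0 with hv | hv
  · calc c ^ p + p * c ^ (p - 1) * (v - c) ≤ c ^ p + p * c ^ (p - 1) * (0 - c) := by
          gcongr
      _ = (1 - p) * c ^ p := by rw [← hcp]; ring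
      _ ≤ |v| ^ p :=
          (mul_nonpos_of_nonpos_of_nonneg (by linarith) (by positivity)).trans (by positivity)
  · have hbern := one_add_mul_self_le_rpow_one_add (s := v / c - 1)
      (by linarith [div_nonneg hv hc.le]) hp
    rw [add_sub_cancel, Real.div_rpow hv hc.le, le_div_iff₀ (by positivity)] at hbern
    calc c ^ p + p * c ^ (p - 1) * (v - c) = (1 + p * (v / c - 1)) * c ^ p := by
          rw [← hcp]; field_simp
      _ ≤ |v| ^ p := by rwa [abs_of_nonneg hv]

/-- The tangent line of the convex function `v ↦ |v| ^ p` at `c` lies below it. -/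
theorem abs_rpow_add_mul_sign_mul_sub_le_abs_rpow {p : ℝ} (hp : 1 ≤ p) (c v : ℝ) :
    |c| ^ p + p * |c| ^ (p - 1) * Real.sign c * (v - c) ≤ |v| ^ p := by
  rcases lt_trichotomy c 0 with hc | rfl | hc
  · have h := rpow_add_mul_sub_le_abs_rpow hp (neg_pos.2 hc) (-v)
    rw [abs_neg] at h
    rw [abs_of_neg hc, Real.sign_of_neg hc]
    linarith
  · simp only [abs_zero, Real.sign_zero, Real.zero_rpow (by linarith : p ≠ 0), mul_zero,
      zero_mul, zero_add]
    positivity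
  · rw [abs_of_pos hc, Real.sign_of_pos hc, mul_one]
    exact rpow_add_mul_sub_le_abs_rpow hp hc v

theorem MeasureTheory.Integrable.mul_of_integrable_mul_abs_rpow {α : Type*}
    [MeasurableSpace α] {μ : Measure α} {p : ℝ} (hp : 1 ≤ p) {a b : α → ℝ}
    (ha₀ : ∀ x, 0 ≤ a x) (ha : Integrable a μ) (hb : AEStronglyMeasurable b μ)
    (hab : Integrable (fun x => a x * |b x| ^ p) μ) : Integrable (fun x => a x * b x) μ := by
  refine (ha.add hab).mono' (ha.aestronglyMeasurable.mul hb) (Eventually.of_forall fun x => ?_)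
  have hb_le : |b x| ≤ 1 + |b x| ^ p := by
    rcases le_total |b x| 1 with h | h
    · linarith [Real.rpow_nonneg (abs_nonneg (b x)) p]
    · linarith [Real.self_le_rpow_of_one_le h hp]
  rw [norm_mul, Real.norm_of_nonneg (ha₀ x), Real.norm_eq_abs]
  calc a x * |b x| ≤ a x * (1 + |b x| ^ p) := mul_le_mul_of_nonneg_left hb_le (ha₀ x)
    _ = a x + a x * |b x| ^ p := by ring

theorem lintegral_mul_eq_of_forall_setLIntegral_eq {Ω : Type*} {m m0 : MeasurableSpace Ω}
    (hm : m ≤ m0) {P : Measure Ω} {g h : Ω → ℝ≥0∞} (hg : AEMeasurable g P)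
    (hh : AEMeasurable h P)
    (hgh : ∀ A, MeasurableSet[m] A → ∫⁻ ω in A, g ω ∂P = ∫⁻ ω in A, h ω ∂P)
    {f : Ω → ℝ≥0∞} (hf : Measurable[m] f) :
    ∫⁻ ω, g ω * f ω ∂P = ∫⁻ ω, h ω * f ω ∂P := by
  have htrim : (P.withDensity g).trim hm = (P.withDensity h).trim hm :=
    @Measure.ext _ m _ _ fun A hA => by
      rw [trim_measurableSet_eq hm hA, trim_measurableSet_eq hm hA,
        withDensity_apply _ (hm _ hA), withDensity_apply _ (hm _ hA), hgh A hA]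
  have hf₀ : AEMeasurable f P := (hf.mono hm le_rfl).aemeasurable
  calc ∫⁻ ω, g ω * f ω ∂P = ∫⁻ ω, f ω ∂(P.withDensity g).trim hm := by
        rw [lintegral_trim hm hf, lintegral_withDensity_eq_lintegral_mul₀ hg hf₀]; rfl
    _ = ∫⁻ ω, h ω * f ω ∂P := by
        rw [htrim, lintegral_trim hm hf, lintegral_withDensity_eq_lintegral_mul₀ hh hf₀]; rfl

theorem lintegral_ofReal_mul_eq_of_condExp_ae_eq {Ω : Type*} {m m0 : MeasurableSpace Ω}
    (hm : m ≤ m0) {P : Measure Ω} [IsFiniteMeasure P] {g h : Ω → ℝ} (hg : Integrable g P)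
    (hg₀ : 0 ≤ᵐ[P] g) (hgh : P[g | m] =ᵐ[P] h) {f : Ω → ℝ≥0∞} (hf : Measurable[m] f) :
    ∫⁻ ω, ENNReal.ofReal (h ω) * f ω ∂P = ∫⁻ ω, ENNReal.ofReal (g ω) * f ω ∂P := by
  have hh : AEMeasurable h P :=
    (stronglyMeasurable_condExp.mono hm).aemeasurable.congr hgh
  refine lintegral_mul_eq_of_forall_setLIntegral_eq hm hh.ennreal_ofReal
    hg.aemeasurable.ennreal_ofReal (fun A hA => ?_) hf
  rw [← setLIntegral_condLExp hm P (fun ω => ENNReal.ofReal (g ω)) hA]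
  refine setLIntegral_congr_fun_ae (hm _ hA) ?_
  filter_upwards [hgh, condLExp_ofReal m hg hg₀] with ω h₁ h₂ _
  rw [h₂, h₁]

section SpaceTime

variable {Ω : Type*} {m0 : MeasurableSpace Ω}

abbrev spaceTime (P : Measure Ω) (T : ℝ) : Measure (ℝ × Ω) :=
  (volume.restrict (Ioc 0 T)).prod P

theorem MeasureTheory.IsStronglyProgressive.aestronglyMeasurable_spaceTime
    {ℱ : Filtration ℝ m0} {f : ℝ → Ω → ℝ} (hf : IsStronglyProgressive ℱ f) (P : Measure Ω)
    [SFinite P] (T : ℝ) : AEStronglyMeasurable (fun z : ℝ × Ω => f z.1 z.2) (spaceTime P T) := by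
  have hclip : Measurable[_, Subtype.instMeasurableSpace.prod (ℱ T)]
      fun z : ℝ × Ω => ((⟨min z.1 T, mem_Iic.2 (min_le_right _ _)⟩ : Iic T), z.2) :=
    (measurable_fst.min measurable_const).subtype_mk.prodMk (measurable_snd.mono le_rfl (ℱ.le T))
  refine ⟨_, (hf T).comp_measurable hclip, ?_⟩
  filter_upwards [Measure.quasiMeasurePreserving_fst.ae (ae_restrict_mem measurableSet_Ioc)]
    with z hz
  simp [min_eq_left hz.2]

variable {ℱ : Filtration ℝ m0} {P : Measure Ω} [IsFiniteMeasure P] {η : ℝ → Ω → ℝ} {T : ℝ}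

theorem lintegral_spaceTime_ofReal_mul_eq_terminal (hη : IsStronglyProgressive ℱ η)
    (hη₀ : ∀ t ω, 0 ≤ η t ω) (hηT : Integrable (η T) P)
    (hmart : ∀ t ∈ Ioc 0 T, P[η T | ℱ t] =ᵐ[P] η t) {v : ℝ → Ω → ℝ}
    (hv : IsStronglyProgressive ℱ v) :
    ∫⁻ z, ENNReal.ofReal (η z.1 z.2) * ENNReal.ofReal (v z.1 z.2) ∂spaceTime P T
      = ∫⁻ z, ENNReal.ofReal (η T z.2) * ENNReal.ofReal (v z.1 z.2) ∂spaceTime P T := by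
  have hηm := (hη.aestronglyMeasurable_spaceTime P T).aemeasurable
  have hvm := (hv.aestronglyMeasurable_spaceTime P T).aemeasurable
  have hηTm : AEMeasurable (fun z : ℝ × Ω => η T z.2) (spaceTime P T) :=
    hηT.aestronglyMeasurable.comp_snd.aemeasurable
  rw [lintegral_prod _ (by fun_prop), lintegral_prod _ (by fun_prop)]
  refine setLIntegral_congr_fun measurableSet_Ioc fun t ht => ?_
  exact lintegral_ofReal_mul_eq_of_condExp_ae_eq (ℱ.le t) hηT (ae_of_all _ (hη₀ T))
    (hmart t ht) (hv.stronglyAdapted t).measurable.ennreal_ofReal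

theorem integrable_spaceTime (hη : IsStronglyProgressive ℱ η)
    (hη₀ : ∀ t ω, 0 ≤ η t ω) (hηT : Integrable (η T) P)
    (hmart : ∀ t ∈ Ioc 0 T, P[η T | ℱ t] =ᵐ[P] η t) :
    Integrable (fun z : ℝ × Ω => η z.1 z.2) (spaceTime P T) := by
  refine ⟨hη.aestronglyMeasurable_spaceTime P T,
    (hasFiniteIntegral_iff_ofReal (ae_of_all _ fun z : ℝ × Ω => hη₀ z.1 z.2)).2 ?_⟩
  have h := lintegral_spaceTime_ofReal_mul_eq_terminal hη hη₀ hηT hmart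
    (isStronglyProgressive_const ℱ (1 : ℝ))
  simp only [ENNReal.ofReal_one, mul_one] at h
  exact h ▸ (hηT.comp_snd _).lintegral_lt_top

theorem integrable_spaceTime_terminal_mul (hη : IsStronglyProgressive ℱ η)
    (hη₀ : ∀ t ω, 0 ≤ η t ω) (hηT : Integrable (η T) P)
    (hmart : ∀ t ∈ Ioc 0 T, P[η T | ℱ t] =ᵐ[P] η t) {v : ℝ → Ω → ℝ}
    (hv : IsStronglyProgressive ℱ v)
    (hηv : Integrable (fun z : ℝ × Ω => η z.1 z.2 * v z.1 z.2) (spaceTime P T)) :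
    Integrable (fun z : ℝ × Ω => η T z.2 * v z.1 z.2) (spaceTime P T) := by
  refine ⟨hηT.aestronglyMeasurable.comp_snd.mul (hv.aestronglyMeasurable_spaceTime P T), ?_⟩
  have hnorm : ∀ a b : ℝ, 0 ≤ a →
      ENNReal.ofReal ‖a * b‖ = ENNReal.ofReal a * ENNReal.ofReal ‖b‖ := fun a b ha => by
    rw [norm_mul, Real.norm_of_nonneg ha, ENNReal.ofReal_mul ha]
  have h := (hasFiniteIntegral_iff_norm _).1 hηv.hasFiniteIntegral
  rw [hasFiniteIntegral_iff_norm]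
  simp only [hnorm _ _ (hη₀ _ _)] at h ⊢
  rwa [← lintegral_spaceTime_ofReal_mul_eq_terminal hη hη₀ hηT hmart hv.norm]

theorem integral_spaceTime_mul_eq_terminal (hη : IsStronglyProgressive ℱ η)
    (hη₀ : ∀ t ω, 0 ≤ η t ω) (hηT : Integrable (η T) P)
    (hmart : ∀ t ∈ Ioc 0 T, P[η T | ℱ t] =ᵐ[P] η t) {v : ℝ → Ω → ℝ}
    (hv : IsStronglyProgressive ℱ v)
    (hηv : Integrable (fun z : ℝ × Ω => η z.1 z.2 * v z.1 z.2) (spaceTime P T)) :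
    ∫ z, η z.1 z.2 * v z.1 z.2 ∂spaceTime P T = ∫ z, η T z.2 * v z.1 z.2 ∂spaceTime P T := by
  rw [integral_eq_lintegral_pos_part_sub_lintegral_neg_part hηv,
    integral_eq_lintegral_pos_part_sub_lintegral_neg_part
      (integrable_spaceTime_terminal_mul hη hη₀ hηT hmart hv hηv)]
  simp only [← mul_neg, ENNReal.ofReal_mul (hη₀ _ _)]
  rw [lintegral_spaceTime_ofReal_mul_eq_terminal hη hη₀ hηT hmart hv,
    lintegral_spaceTime_ofReal_mul_eq_terminal hη hη₀ hηT hmart hv.neg]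

theorem integral_spaceTime_mul_eq_of_ae_setIntegral_eq (hη : IsStronglyProgressive ℱ η)
    (hη₀ : ∀ t ω, 0 ≤ η t ω) (hηT : Integrable (η T) P)
    (hmart : ∀ t ∈ Ioc 0 T, P[η T | ℱ t] =ᵐ[P] η t) {v : ℝ → Ω → ℝ}
    (hv : IsStronglyProgressive ℱ v)
    (hηv : Integrable (fun z : ℝ × Ω => η z.1 z.2 * v z.1 z.2) (spaceTime P T)) {a : ℝ}
    (ha : ∀ᵐ ω ∂P, ∫ t in Ioc 0 T, v t ω = a) :
    ∫ z, η z.1 z.2 * v z.1 z.2 ∂spaceTime P T = a * ∫ ω, η T ω ∂P := by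
  rw [integral_spaceTime_mul_eq_terminal hη hη₀ hηT hmart hv hηv,
    integral_prod_symm _ (integrable_spaceTime_terminal_mul hη hη₀ hηT hmart hv hηv),
    ← integral_const_mul]
  refine integral_congr_ae ?_
  filter_upwards [ha] with ω hω
  rw [integral_const_mul, hω, mul_comm]

end SpaceTime

section Control

variable {Ω : Type*} {m0 : MeasurableSpace Ω} {ℱ : Filtration ℝ m0} {P : Measure Ω}
  {η γ : ℝ → Ω → ℝ} {T p : ℝ}

theorem isAdmissible_linear (P : Measure Ω) (hT : 0 < T) (ξ : ℝ) :
    IsAdmissible ℱ P T ξ (fun t _ => ξ * (1 - t / T)) (fun _ _ => -(ξ / T)) := by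
  refine ⟨⟨isStronglyProgressive_const ℱ _, ?_,
    fun _ => integrableOn_const isCompact_Icc.measure_lt_top.ne, fun _ _ _ => ?_⟩,
    ae_of_all _ fun _ => ?_⟩
  · exact StronglyAdapted.isStronglyProgressive_of_continuous
      (fun _ => stronglyMeasurable_const) fun _ => by fun_prop
  · simp only [intervalIntegral.integral_const, smul_eq_mul]
    ring
  · simp [hT.ne']

theorem cost_eq_lintegral_spaceTime [SFinite P] (hγ : ∀ t ω, γ t ω = 0)
    (hη : IsStronglyProgressive ℱ η) {y w : ℝ → Ω → ℝ} (hw : IsStronglyProgressive ℱ w) :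
    cost P T p η γ y w = ∫⁻ z, ENNReal.ofReal (η z.1 z.2 * |w z.1 z.2| ^ p) ∂spaceTime P T := by
  have hηm := (hη.aestronglyMeasurable_spaceTime P T).aemeasurable
  have hwm := (hw.aestronglyMeasurable_spaceTime P T).aemeasurable
  simp only [cost, hγ, zero_mul, add_zero]
  rw [lintegral_prod_symm _ (by fun_prop)]

theorem IsAdmissible.ae_setIntegral_Ioc_eq (hT : 0 < T) {ξ : ℝ} {y w : ℝ → Ω → ℝ}
    (hy : IsAdmissible ℱ P T ξ y w) : ∀ᵐ ω ∂P, ∫ t in Ioc 0 T, w t ω = -ξ := by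
  filter_upwards [hy.2] with ω hω
  have h := hy.1.2.2.2 ω T ⟨hT.le, le_rfl⟩
  rw [hω, intervalIntegral.integral_of_le hT.le] at h
  linarith

variable [IsFiniteMeasure P]

theorem cost_linear (hT : 0 < T) (hη : IsStronglyProgressive ℱ η) (hη₀ : ∀ t ω, 0 ≤ η t ω)
    (hηT : Integrable (η T) P) (hmart : ∀ t ∈ Ioc 0 T, P[η T | ℱ t] =ᵐ[P] η t)
    (hγ : ∀ t ω, γ t ω = 0) (ξ : ℝ) :
    cost P T p η γ (fun t _ => ξ * (1 - t / T)) (fun _ _ => -(ξ / T))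
      = ENNReal.ofReal (T * |ξ / T| ^ p * ∫ ω, η T ω ∂P) := by
  have hηv := (integrable_spaceTime hη hη₀ hηT hmart).mul_const (|-(ξ / T)| ^ p)
  rw [cost_eq_lintegral_spaceTime hγ hη (isStronglyProgressive_const ℱ _),
    ← ofReal_integral_eq_lintegral_ofReal hηv
      (ae_of_all _ fun z => mul_nonneg (hη₀ _ _) (by positivity)),
    integral_spaceTime_mul_eq_of_ae_setIntegral_eq hη hη₀ hηT hmart
      (isStronglyProgressive_const ℱ _) hηv (a := T * |ξ / T| ^ p) (ae_of_all _ fun _ => ?_)]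
  rw [setIntegral_const, Real.volume_real_Ioc_of_le hT.le, abs_neg, sub_zero, smul_eq_mul]

theorem mul_integral_le_integral_of_isAdmissible (hT : 0 < T) (hp : 1 ≤ p)
    (hη : IsStronglyProgressive ℱ η) (hη₀ : ∀ t ω, 0 ≤ η t ω) (hηT : Integrable (η T) P)
    (hmart : ∀ t ∈ Ioc 0 T, P[η T | ℱ t] =ᵐ[P] η t) {ξ : ℝ} {y w : ℝ → Ω → ℝ}
    (hy : IsAdmissible ℱ P T ξ y w)
    (hG : Integrable (fun z : ℝ × Ω => η z.1 z.2 * |w z.1 z.2| ^ p) (spaceTime P T)) :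
    T * |ξ / T| ^ p * ∫ ω, η T ω ∂P ≤ ∫ z, η z.1 z.2 * |w z.1 z.2| ^ p ∂spaceTime P T := by
  have hw : IsStronglyProgressive ℱ w := hy.1.1
  set c := -(ξ / T)
  set K := p * |c| ^ (p - 1) * Real.sign c
  have hv : IsStronglyProgressive ℱ fun t ω => |c| ^ p + K * (w t ω - c) :=
    (isStronglyProgressive_const ℱ _).add
      ((isStronglyProgressive_const ℱ K).mul (hw.sub (isStronglyProgressive_const ℱ c)))
  have hηE := integrable_spaceTime hη hη₀ hηT hmart
  have hηw := hηE.mul_of_integrable_mul_abs_rpow hp (fun z => hη₀ z.1 z.2)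
    (hw.aestronglyMeasurable_spaceTime P T) hG
  have hηv : Integrable (fun z : ℝ × Ω => η z.1 z.2 * (|c| ^ p + K * (w z.1 z.2 - c)))
      (spaceTime P T) :=
    ((hηE.mul_const (|c| ^ p - K * c)).add (hηw.const_mul K)).congr
      (ae_of_all _ fun z => by simp only [Pi.add_apply]; ring)
  have hpath : ∀ᵐ ω ∂P, ∫ t in Ioc 0 T, (|c| ^ p + K * (w t ω - c)) = T * |ξ / T| ^ p := by
    filter_upwards [hy.ae_setIntegral_Ioc_eq hT] with ω hω
    have hwi : IntegrableOn (fun t => w t ω) (Ioc 0 T) :=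
      (hy.1.2.2.1 ω).mono_set Ioc_subset_Icc_self
    have hcT : T * c = -ξ := by simp only [c]; field_simp
    have hsplit : ∀ t, |c| ^ p + K * (w t ω - c) = (|c| ^ p - K * c) + K * w t ω :=
      fun t => by ring
    simp only [hsplit]
    rw [integral_add (integrable_const _) (hwi.const_mul K), integral_const_mul, hω,
      setIntegral_const, Real.volume_real_Ioc_of_le hT.le, sub_zero, smul_eq_mul, abs_neg]
    linear_combination (-K) * hcT
  calc T * |ξ / T| ^ p * ∫ ω, η T ω ∂P
      = ∫ z, η z.1 z.2 * (|c| ^ p + K * (w z.1 z.2 - c)) ∂spaceTime P T :=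
        (integral_spaceTime_mul_eq_of_ae_setIntegral_eq hη hη₀ hηT hmart hv hηv hpath).symm
    _ ≤ ∫ z, η z.1 z.2 * |w z.1 z.2| ^ p ∂spaceTime P T :=
        integral_mono hηv hG fun z => mul_le_mul_of_nonneg_left
          (abs_rpow_add_mul_sign_mul_sub_le_abs_rpow hp c _) (hη₀ _ _)

theorem ofReal_le_cost_of_isAdmissible (hT : 0 < T) (hp : 1 ≤ p)
    (hη : IsStronglyProgressive ℱ η) (hη₀ : ∀ t ω, 0 ≤ η t ω) (hηT : Integrable (η T) P)
    (hmart : ∀ t ∈ Ioc 0 T, P[η T | ℱ t] =ᵐ[P] η t) (hγ : ∀ t ω, γ t ω = 0) {ξ : ℝ}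
    {y w : ℝ → Ω → ℝ} (hy : IsAdmissible ℱ P T ξ y w) :
    ENNReal.ofReal (T * |ξ / T| ^ p * ∫ ω, η T ω ∂P) ≤ cost P T p η γ y w := by
  have hw : IsStronglyProgressive ℱ w := hy.1.1
  have hG₀ : ∀ z : ℝ × Ω, 0 ≤ η z.1 z.2 * |w z.1 z.2| ^ p :=
    fun z => mul_nonneg (hη₀ _ _) (by positivity)
  rw [cost_eq_lintegral_spaceTime hγ hη hw]
  rcases eq_or_ne (∫⁻ z, ENNReal.ofReal (η z.1 z.2 * |w z.1 z.2| ^ p) ∂spaceTime P T) ⊤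
    with htop | hfin
  · exact htop ▸ le_top
  have hGm : AEMeasurable (fun z : ℝ × Ω => η z.1 z.2 * |w z.1 z.2| ^ p) (spaceTime P T) :=
    (hη.aestronglyMeasurable_spaceTime P T).aemeasurable.mul
      ((hw.aestronglyMeasurable_spaceTime P T).aemeasurable.abs.pow_const p)
  have hG : Integrable (fun z : ℝ × Ω => η z.1 z.2 * |w z.1 z.2| ^ p) (spaceTime P T) :=
    ⟨hGm.aestronglyMeasurable, (hasFiniteIntegral_iff_ofReal (ae_of_all _ hG₀)).2 hfin.lt_top⟩
  rw [← ofReal_integral_eq_lintegral_ofReal hG (ae_of_all _ hG₀)]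
  exact ENNReal.ofReal_le_ofReal
    (mul_integral_le_integral_of_isAdmissible hT hp hη hη₀ hηT hmart hy hG)

end Control

theorem linear_closure_optimal_for_martingale_general
    {Ω : Type*} {m0 : MeasurableSpace Ω} (P : Measure Ω) [IsProbabilityMeasure P]
    (ℱ : Filtration ℝ m0) (T p : ℝ) (hT : 0 < T) (hp : 1 < p)
    (η γ : ℝ → Ω → ℝ) (hηprog : ProgMeasurable ℱ η)
    (hγ0 : ∀ t ω, γ t ω = 0)
    (hpos : ∀ t ω, 0 < η t ω)
    (hint : ∀ t, 0 ≤ t → t ≤ T → Integrable (η t) P)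
    (hmart : ∀ s t, 0 ≤ s → s ≤ t → t ≤ T → P[η t | ℱ s] =ᵐ[P] η s)
    (ξ : ℝ) (x u : ℝ → Ω → ℝ)
    (hxdef : ∀ t ω, x t ω = ξ * (1 - t / T))
    (hudef : ∀ t ω, u t ω = -(ξ / T)) :
    IsAdmissible ℱ P T ξ x u ∧
    (∀ y w, IsAdmissible ℱ P T ξ y w → cost P T p η γ x u ≤ cost P T p η γ y w) ∧
    cost P T p η γ x u = ENNReal.ofReal (|ξ| ^ p * (∫ ω, η 0 ω ∂P) * T ^ (1 - p)) := by
  obtain rfl : x = fun t _ => ξ * (1 - t / T) := funext₂ hxdef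
  obtain rfl : u = fun _ _ => -(ξ / T) := funext₂ hudef
  have hη₀ : ∀ t ω, 0 ≤ η t ω := fun t ω => (hpos t ω).le
  have hηT : Integrable (η T) P := hint T hT.le le_rfl
  have hmartT : ∀ t ∈ Ioc 0 T, P[η T | ℱ t] =ᵐ[P] η t :=
    fun t ht => hmart t T ht.1.le ht.2 le_rfl
  have hmean : ∫ ω, η T ω ∂P = ∫ ω, η 0 ω ∂P :=
    (integral_condExp (ℱ.le 0)).symm.trans (integral_congr_ae (hmart 0 T le_rfl hT.le le_rfl))
  have hcost := cost_linear (p := p) hT hηprog hη₀ hηT hmartT hγ0 ξ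
  refine ⟨isAdmissible_linear P hT ξ, fun y w hy => hcost ▸
    ofReal_le_cost_of_isAdmissible hT hp.le hηprog hη₀ hηT hmartT hγ0 hy, hcost.trans ?_⟩
  rw [hmean, abs_div, abs_of_pos hT, Real.div_rpow (abs_nonneg ξ) hT.le, Real.rpow_sub hT,
    Real.rpow_one]
  congr 1
  field_simp

/-- with `γ ≡ 0` and `η` a positive martingale on `[0,T]` with
`E[∫_0^T η_t^{1-q} dt] < ∞` and `E[η_T^2] < ∞`, for every `ξ ∈ ℝ` the control with
constant closure rate `x_t = ξ·(1 − t/T)` is admissible and optimal, with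
`J(x) = |ξ|^p·E[η_0]·T^{1-p}`. -/
theorem linear_closure_optimal_for_martingale
    {Ω : Type*} {m0 : MeasurableSpace Ω} (P : Measure Ω) [IsProbabilityMeasure P]
    (ℱ : Filtration ℝ m0) (T p q : ℝ) (hT : 0 < T) (hp : 1 < p) (hq : q = p / (p - 1))
    (η γ : ℝ → Ω → ℝ) (hηprog : ProgMeasurable ℱ η)
    (hγ0 : ∀ t ω, γ t ω = 0)
    (hpos : ∀ t ω, 0 < η t ω)
    (hint : ∀ t, 0 ≤ t → t ≤ T → Integrable (η t) P)
    (hmart : ∀ s t, 0 ≤ s → s ≤ t → t ≤ T → P[η t | ℱ s] =ᵐ[P] η s)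
    (hηq : ∫⁻ ω, (∫⁻ t in Set.Ioc (0 : ℝ) T, ENNReal.ofReal (η t ω ^ (1 - q))) ∂P < ⊤)
    (hηT : ∫⁻ ω, ENNReal.ofReal ((η T ω) ^ 2) ∂P < ⊤)
    (ξ : ℝ) (x u : ℝ → Ω → ℝ)
    (hxdef : ∀ t ω, x t ω = ξ * (1 - t / T))
    (hudef : ∀ t ω, u t ω = -(ξ / T)) :
    IsAdmissible ℱ P T ξ x u ∧
    (∀ y w, IsAdmissible ℱ P T ξ y w → cost P T p η γ x u ≤ cost P T p η γ y w) ∧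
    cost P T p η γ x u = ENNReal.ofReal (|ξ| ^ p * (∫ ω, η 0 ω ∂P) * T ^ (1 - p)) :=
  linear_closure_optimal_for_martingale_general P ℱ T p hT hp η γ hηprog hγ0 hpos hint hmart ξ x u
    hxdef hudef
end
end

section
/- Assume γ ≡ 0 and let η be a positive martingale on [0,T] with E[η_T^2] < ∞ (no further integrability required). Then for every initial value ξ ∈ ℝ the control with constant closure rate x_t = ξ·(1 − t/T) is admissible and optimal: J(x) ≤ J(y) for every admissible control y ∈ A_0(ξ). -/
open MeasureTheory Set
open scoped ENNReal Classical

noncomputable section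

/-! With `γ = 0` the cost of a control with rate `w` is `E[∫_0^T η_t |w_t|^p dt]`. Since
`|w_t|^p` is `ℱ_t`-measurable and `η` is a martingale, `η_t` may be replaced by `η_T`, so the cost
equals `E[η_T ∫_0^T |w_t|^p dt]`. Pathwise, Jensen's inequality gives
`∫_0^T |w_t|^p dt ≥ T |ξ/T|^p` whenever `∫_0^T w = -ξ`, with equality for the constant rate
`-ξ/T`. -/

theorem measure_univ_mul_enorm_average_rpow_le {α E : Type*} [MeasurableSpace α]
    [NormedAddCommGroup E] [NormedSpace ℝ E] {μ : Measure α} [IsFiniteMeasure μ]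
    {p : ℝ} (hp : 1 ≤ p) {f : α → E} (hf : Integrable f μ) :
    μ univ * ‖⨍ x, f x ∂μ‖ₑ ^ p ≤ ∫⁻ x, ‖f x‖ₑ ^ p ∂μ := by
  rcases eq_zero_or_neZero μ with rfl | _
  · simp
  have hM0 : μ univ ≠ 0 := NeZero.ne _
  have hMtop : μ univ ≠ ∞ := measure_ne_top μ univ
  have hp0 : 0 < p := zero_lt_one.trans_le hp
  have holder : μ univ * ‖⨍ x, f x ∂μ‖ₑ
      ≤ (∫⁻ x, ‖f x‖ₑ ^ p ∂μ) ^ (1 / p) * μ univ ^ (1 - 1 / p) :=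
    calc μ univ * ‖⨍ x, f x ∂μ‖ₑ = ‖∫ x, f x ∂μ‖ₑ := by
          rw [← measure_smul_average, enorm_smul, Real.enorm_of_nonneg measureReal_nonneg,
            measureReal_def, ENNReal.ofReal_toReal hMtop]
      _ ≤ ∫⁻ x, ‖f x‖ₑ ∂μ := enorm_integral_le_lintegral_enorm f
      _ ≤ _ := by
          simpa [eLpNorm'_eq_lintegral_enorm] using
            eLpNorm'_le_eLpNorm'_mul_rpow_measure_univ zero_lt_one hp hf.aestronglyMeasurable
  have hMp : μ univ ^ p = μ univ ^ (p - 1) * μ univ := by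
    simpa using ENNReal.rpow_add (p - 1) 1 hM0 hMtop
  have hpow := ENNReal.rpow_le_rpow holder hp0.le
  rw [ENNReal.mul_rpow_of_nonneg _ _ hp0.le, ENNReal.mul_rpow_of_nonneg _ _ hp0.le,
    ← ENNReal.rpow_mul, ← ENNReal.rpow_mul, one_div_mul_cancel hp0.ne', ENNReal.rpow_one,
    sub_mul, one_div_mul_cancel hp0.ne', one_mul, hMp, mul_assoc, mul_comm (∫⁻ x, _ ∂μ)] at hpow
  exact (ENNReal.mul_le_mul_iff_right (ENNReal.rpow_pos (pos_iff_ne_zero.2 hM0) hMtop).ne'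
    (ENNReal.rpow_ne_top_of_nonneg (sub_nonneg.2 hp) hMtop)).1 hpow

theorem setLIntegral_enorm_rpow_const_velocity_le {T p : ℝ} (hT : 0 < T) (hp : 1 ≤ p)
    {w : ℝ → ℝ} (hw : IntegrableOn w (Ioc 0 T)) :
    ∫⁻ _ in Ioc 0 T, ‖(∫ s in 0..T, w s) / T‖ₑ ^ p ≤ ∫⁻ t in Ioc 0 T, ‖w t‖ₑ ^ p := by
  have hT' : volume.real (Ioc 0 T) = T := by simp [hT.le]
  have havg : (∫ s in 0..T, w s) / T = ⨍ t in Ioc 0 T, w t := by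
    rw [setAverage_eq, hT', intervalIntegral.integral_of_le hT.le, smul_eq_mul, inv_mul_eq_div]
  rw [setLIntegral_const, havg, mul_comm, ← Measure.restrict_apply_univ]
  exact measure_univ_mul_enorm_average_rpow_le hp hw

namespace MeasureTheory.IsStronglyProgressive

variable {Ω : Type*} {m0 : MeasurableSpace Ω} {ℱ : Filtration ℝ m0} {f : ℝ → Ω → ℝ}

theorem measurable_uncurry_min (hf : IsStronglyProgressive ℱ f) (T : ℝ) :
    Measurable fun z : ℝ × Ω => f (min z.1 T) z.2 := by
  have hstop : @Measurable (ℝ × Ω) (Iic T × Ω) _ (Subtype.instMeasurableSpace.prod (ℱ T))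
      fun z => (⟨min z.1 T, mem_Iic.2 (min_le_right _ _)⟩, z.2) :=
    (measurable_fst.min measurable_const).subtype_mk.prodMk
      (measurable_snd.mono le_rfl (ℱ.le T))
  exact (hf T).measurable.comp hstop

theorem aemeasurable_prod_swap (hf : IsStronglyProgressive ℱ f) (P : Measure Ω) [SFinite P]
    {ν : Measure ℝ} {T : ℝ} (hν : ∀ᵐ t ∂ν, t ≤ T) :
    AEMeasurable (fun z : Ω × ℝ => f z.2 z.1) (P.prod ν) :=
  ((hf.measurable_uncurry_min T).comp measurable_swap).aemeasurable.congr <|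
    (Measure.quasiMeasurePreserving_snd.ae hν).mono fun z hz => by simp [min_eq_left hz]

end MeasureTheory.IsStronglyProgressive

theorem lintegral_ofReal_condExp_mul {Ω : Type*} {m m0 : MeasurableSpace Ω} (hm : m ≤ m0)
    {P : Measure Ω} [SigmaFinite (P.trim hm)] {f : Ω → ℝ} (hf : Integrable f P)
    (hf0 : 0 ≤ᵐ[P] f) {G : Ω → ℝ≥0∞} (hG : Measurable[m] G) :
    ∫⁻ ω, ENNReal.ofReal (P[f|m] ω) * G ω ∂P = ∫⁻ ω, ENNReal.ofReal (f ω) * G ω ∂P := by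
  -- `G` may be unbounded, so compare the measures with densities `P[f|m]` and `f` on `m` instead.
  have hdensity : (P.withDensity fun ω => ENNReal.ofReal (P[f|m] ω)).trim hm
      = (P.withDensity fun ω => ENNReal.ofReal (f ω)).trim hm := by
    refine @Measure.ext Ω m _ _ fun A hA => ?_
    rw [trim_measurableSet_eq hm hA, trim_measurableSet_eq hm hA,
      withDensity_apply _ (hm A hA), withDensity_apply _ (hm A hA),
      ← ofReal_integral_eq_lintegral_ofReal integrable_condExp.restrict
        (ae_restrict_of_ae (condExp_nonneg hf0)),
      ← ofReal_integral_eq_lintegral_ofReal hf.restrict (ae_restrict_of_ae hf0),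
      setIntegral_condExp hm hf hA]
  have hG' : AEMeasurable G P := (hG.mono hm le_rfl).aemeasurable
  calc ∫⁻ ω, ENNReal.ofReal (P[f|m] ω) * G ω ∂P
      = ∫⁻ ω, G ω ∂(P.withDensity fun ω => ENNReal.ofReal (P[f|m] ω)) :=
        (lintegral_withDensity_eq_lintegral_mul₀
          integrable_condExp.aemeasurable.ennreal_ofReal hG').symm
    _ = ∫⁻ ω, G ω ∂(P.withDensity fun ω => ENNReal.ofReal (f ω)) := by
        rw [← lintegral_trim hm hG, hdensity, lintegral_trim hm hG]
    _ = ∫⁻ ω, ENNReal.ofReal (f ω) * G ω ∂P :=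
        lintegral_withDensity_eq_lintegral_mul₀ hf.aemeasurable.ennreal_ofReal hG'

theorem cost_zero_eq_lintegral_terminal {Ω : Type*} {m0 : MeasurableSpace Ω} {P : Measure Ω}
    [IsFiniteMeasure P] {ℱ : Filtration ℝ m0} {T p : ℝ} (hp : 0 ≤ p) {η : ℝ → Ω → ℝ}
    (hη : IsStronglyProgressive ℱ η) (hη0 : ∀ t ω, 0 ≤ η t ω) (hηT : Integrable (η T) P)
    (hmart : ∀ t ∈ Ioc 0 T, P[η T|ℱ t] =ᵐ[P] η t) (y : ℝ → Ω → ℝ) {w : ℝ → Ω → ℝ}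
    (hw : IsStronglyProgressive ℱ w) :
    cost P T p η 0 y w = ∫⁻ ω, ENNReal.ofReal (η T ω) * (∫⁻ t in Ioc 0 T, ‖w t ω‖ₑ ^ p) ∂P := by
  have hbefore : ∀ᵐ t ∂(volume.restrict (Ioc 0 T)), t ≤ T :=
    (ae_restrict_mem measurableSet_Ioc).mono fun t ht => ht.2
  have hwp : AEMeasurable (fun z : Ω × ℝ => ‖w z.2 z.1‖ₑ ^ p)
      (P.prod (volume.restrict (Ioc 0 T))) :=
    (hw.aemeasurable_prod_swap P hbefore).enorm.pow_const p
  have hG : ∀ t, Measurable[ℱ t] fun ω => ‖w t ω‖ₑ ^ p := fun t =>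
    (measurable_enorm.pow_const p).comp (hw.stronglyAdapted t).measurable
  have hintegrand : ∀ t ω,
      ENNReal.ofReal (η t ω * |w t ω| ^ p + (0 : ℝ → Ω → ℝ) t ω * |y t ω| ^ p)
        = ENNReal.ofReal (η t ω) * ‖w t ω‖ₑ ^ p := fun t ω => by
    rw [Pi.zero_apply, Pi.zero_apply, zero_mul, add_zero, ENNReal.ofReal_mul (hη0 t ω),
      Real.enorm_eq_ofReal_abs, ENNReal.ofReal_rpow_of_nonneg (abs_nonneg _) hp]
  calc cost P T p η 0 y w
      = ∫⁻ ω, (∫⁻ t in Ioc 0 T, ENNReal.ofReal (η t ω) * ‖w t ω‖ₑ ^ p) ∂P := by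
        simp only [cost, hintegrand]
    _ = ∫⁻ t in Ioc 0 T, ∫⁻ ω, ENNReal.ofReal (η t ω) * ‖w t ω‖ₑ ^ p ∂P :=
        lintegral_lintegral_swap ((hη.aemeasurable_prod_swap P hbefore).ennreal_ofReal.mul hwp)
    _ = ∫⁻ t in Ioc 0 T, ∫⁻ ω, ENNReal.ofReal (η T ω) * ‖w t ω‖ₑ ^ p ∂P := by
        refine setLIntegral_congr_fun measurableSet_Ioc fun t ht => ?_
        rw [← lintegral_ofReal_condExp_mul (ℱ.le t) hηT (ae_of_all _ (hη0 T)) (hG t)]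
        exact lintegral_congr_ae ((hmart t ht).mono fun ω h => by simp only [h])
    _ = ∫⁻ ω, (∫⁻ t in Ioc 0 T, ENNReal.ofReal (η T ω) * ‖w t ω‖ₑ ^ p) ∂P :=
        (lintegral_lintegral_swap ((hηT.aemeasurable.comp_quasiMeasurePreserving
          Measure.quasiMeasurePreserving_fst).ennreal_ofReal.mul hwp)).symm
    _ = ∫⁻ ω, ENNReal.ofReal (η T ω) * (∫⁻ t in Ioc 0 T, ‖w t ω‖ₑ ^ p) ∂P :=
        lintegral_congr fun ω => lintegral_const_mul' _ _ ENNReal.ofReal_ne_top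

theorem isAdmissible_linear_closure {Ω : Type*} {m0 : MeasurableSpace Ω} (P : Measure Ω)
    (ℱ : Filtration ℝ m0) {T : ℝ} (hT : T ≠ 0) (ξ : ℝ) :
    IsAdmissible ℱ P T ξ (fun t _ => ξ * (1 - t / T)) (fun _ _ => -(ξ / T)) := by
  refine ⟨⟨isStronglyProgressive_const ℱ _, ?_, fun _ => ?_, fun ω t _ => ?_⟩, ?_⟩
  · exact StronglyAdapted.isStronglyProgressive_of_continuous (fun _ => stronglyMeasurable_const)
      fun _ => by fun_prop
  · exact integrableOn_const measure_Icc_lt_top.ne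
  · rw [intervalIntegral.integral_const, smul_eq_mul, sub_zero]
    field_simp
    ring
  · exact ae_of_all _ fun _ => by simp [div_self hT]

theorem linear_closure_optimal_for_martingale_weak_general
    {Ω : Type*} {m0 : MeasurableSpace Ω} (P : Measure Ω) [IsProbabilityMeasure P]
    (ℱ : Filtration ℝ m0) (T p : ℝ) (hT : 0 < T) (hp : 1 < p)
    (η γ : ℝ → Ω → ℝ) (hηprog : ProgMeasurable ℱ η)
    (hγ0 : ∀ t ω, γ t ω = 0)
    (hpos : ∀ t ω, 0 < η t ω)
    (hint : ∀ t, 0 ≤ t → t ≤ T → Integrable (η t) P)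
    (hmart : ∀ s t, 0 ≤ s → s ≤ t → t ≤ T → P[η t | ℱ s] =ᵐ[P] η s)
    (ξ : ℝ) (x u : ℝ → Ω → ℝ)
    (hxdef : ∀ t ω, x t ω = ξ * (1 - t / T))
    (hudef : ∀ t ω, u t ω = -(ξ / T)) :
    IsAdmissible ℱ P T ξ x u ∧
    (∀ y w, IsAdmissible ℱ P T ξ y w → cost P T p η γ x u ≤ cost P T p η γ y w) := by
  obtain rfl : x = fun t _ => ξ * (1 - t / T) := funext₂ hxdef
  obtain rfl : u = fun _ _ => -(ξ / T) := funext₂ hudef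
  obtain rfl : γ = 0 := funext₂ hγ0
  have hlinear := isAdmissible_linear_closure P ℱ hT.ne' ξ
  have hcost := cost_zero_eq_lintegral_terminal (zero_le_one.trans hp.le) hηprog
    (fun t ω => (hpos t ω).le) (hint T hT.le le_rfl)
    (fun t ht => hmart t T ht.1.le ht.2 le_rfl)
  refine ⟨hlinear, fun y w ⟨⟨hw, _, hwint, hy⟩, hyT⟩ => ?_⟩
  rw [hcost _ hlinear.1.1, hcost _ hw]
  refine lintegral_mono_ae (hyT.mono fun ω hyTω => mul_le_mul_right ?_ _)
  have hdisplacement : ∫ s in 0..T, w s ω = -ξ := by linarith [hy ω T ⟨hT.le, le_rfl⟩]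
  have hjensen := setLIntegral_enorm_rpow_const_velocity_le hT hp.le
    ((hwint ω).mono_set Ioc_subset_Icc_self)
  rwa [hdisplacement, neg_div] at hjensen

/-- with `γ ≡ 0` and `η` a positive martingale on `[0,T]` with
`E[η_T^2] < ∞` (no further integrability required), for every `ξ ∈ ℝ` the control with
constant closure rate `x_t = ξ·(1 − t/T)` is admissible and optimal. -/
theorem linear_closure_optimal_for_martingale_weak
    {Ω : Type*} {m0 : MeasurableSpace Ω} (P : Measure Ω) [IsProbabilityMeasure P]
    (ℱ : Filtration ℝ m0) (T p q : ℝ) (hT : 0 < T) (hp : 1 < p) (hq : q = p / (p - 1))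
    (η γ : ℝ → Ω → ℝ) (hηprog : ProgMeasurable ℱ η)
    (hγ0 : ∀ t ω, γ t ω = 0)
    (hpos : ∀ t ω, 0 < η t ω)
    (hint : ∀ t, 0 ≤ t → t ≤ T → Integrable (η t) P)
    (hmart : ∀ s t, 0 ≤ s → s ≤ t → t ≤ T → P[η t | ℱ s] =ᵐ[P] η s)
    (hηT : ∫⁻ ω, ENNReal.ofReal ((η T ω) ^ 2) ∂P < ⊤)
    (ξ : ℝ) (x u : ℝ → Ω → ℝ)
    (hxdef : ∀ t ω, x t ω = ξ * (1 - t / T))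
    (hudef : ∀ t ω, u t ω = -(ξ / T)) :
    IsAdmissible ℱ P T ξ x u ∧
    (∀ y w, IsAdmissible ℱ P T ξ y w → cost P T p η γ x u ≤ cost P T p η γ y w) :=
  linear_closure_optimal_for_martingale_weak_general P ℱ T p hT hp η γ hηprog hγ0 hpos hint hmart ξ
    x u hxdef hudef
end
end

section
/- Assume γ ≡ 0 and that η is a deterministic measurable function η:[0,T]→(0,∞) satisfying ∫_0^T η_s^{1-q} ds < ∞, ∫_0^T η_s^2 ds < ∞ and η_T < ∞. Then for every initial value ξ ∈ ℝ the deterministic control x_t = ξ·(∫_t^T η_s^{1-q} ds)/(∫_0^T η_s^{1-q} ds) is admissible and optimal: J(x) ≤ J(y) for every admissible control y ∈ A_0(ξ), and J(x) = |ξ|^p·(∫_0^T η_s^{1-q} ds)^{1-p}. -/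
open MeasureTheory Set
open scoped ENNReal Classical

noncomputable section

/-! With `γ ≡ 0` the cost only sees the derivative `u`, and every admissible control has
`∫_0^T u = -ξ`. Hölder's inequality for `|u| = (η^{1/p} |u|) · η^{-1/p}` gives
`|ξ| ≤ (∫ η |u|^p)^{1/p} (∫ η^{1-q})^{1/q}`, i.e. `J ≥ |ξ|^p (∫ η^{1-q})^{1-p}`. The candidate
`u ∝ η^{1-q}` makes `η |u|^p` proportional to `η^{1-q}`, the equality case of Hölder, so it
attains the bound. -/

lemma measurable_setIntegral_prodMk_preimage {α β : Type*} [MeasurableSpace α]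
    [MeasurableSpace β] {ν : Measure β} [SFinite ν] {f : β → ℝ} (hf : Measurable f)
    {S : Set (α × β)} (hS : MeasurableSet S) :
    Measurable fun a => ∫ b in Prod.mk a ⁻¹' S, f b ∂ν := by
  have h : (fun a => ∫ b in Prod.mk a ⁻¹' S, f b ∂ν) =
      fun a => ∫ b, S.indicator (fun z => f z.2) (a, b) ∂ν := by
    funext a
    rw [← integral_indicator (measurable_prodMk_left hS)]
    rfl
  rw [h]
  exact ((hf.comp measurable_snd).indicator hS).stronglyMeasurable.integral_prod_right'.measurable

lemma measurable_intervalIntegral_left {f : ℝ → ℝ} (hf : Measurable f) (b : ℝ) :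
    Measurable fun a => ∫ s in a..b, f s := by
  have hIoc : Measurable fun a => ∫ s in Ioc a b, f s :=
    measurable_setIntegral_prodMk_preimage (S := {z : ℝ × ℝ | z.1 < z.2 ∧ z.2 ≤ b}) hf
      ((measurableSet_lt measurable_fst measurable_snd).inter (measurable_snd measurableSet_Iic))
  have hIoc' : Measurable fun a => ∫ s in Ioc b a, f s :=
    measurable_setIntegral_prodMk_preimage (S := {z : ℝ × ℝ | b < z.2 ∧ z.2 ≤ z.1}) hf
      ((measurable_snd measurableSet_Ioi).inter (measurableSet_le measurable_snd measurable_fst))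
  exact hIoc.sub hIoc'

lemma isStronglyProgressive_deterministic {Ω ι β : Type*} {m0 : MeasurableSpace Ω}
    [MeasurableSpace ι] [Preorder ι] [TopologicalSpace β] [TopologicalSpace.PseudoMetrizableSpace β]
    [MeasurableSpace β] [BorelSpace β] [SecondCountableTopology β]
    (ℱ : Filtration ι m0) {f : ι → β} (hf : Measurable f) :
    IsStronglyProgressive ℱ fun t (_ : Ω) => f t := fun _ =>
  (hf.comp (measurable_subtype_coe.comp measurable_fst)).stronglyMeasurable

lemma isAdmissible_normalized_primitive {Ω : Type*} {m0 : MeasurableSpace Ω}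
    (ℱ : Filtration ℝ m0) (P : Measure Ω) {T ξ : ℝ} {f : ℝ → ℝ} (hf : Measurable f)
    (hfi : IntegrableOn f (Icc 0 T)) (hI : ∫ s in (0 : ℝ)..T, f s ≠ 0) :
    IsAdmissible ℱ P T ξ (fun t _ => ξ * (∫ s in t..T, f s) / ∫ s in (0 : ℝ)..T, f s)
      (fun t _ => -(ξ * f t / ∫ s in (0 : ℝ)..T, f s)) := by
  set I := ∫ s in (0 : ℝ)..T, f s
  have hu : (fun t => -(ξ * f t / I)) = fun t => -(ξ / I) * f t := by
    funext t; ring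
  have hsub : ∀ {a b}, a ∈ Icc 0 T → b ∈ Icc 0 T → IntervalIntegrable f volume a b :=
    fun ha hb => (hfi.mono_set (uIcc_subset_Icc ha hb)).intervalIntegrable
  refine ⟨⟨?_, ?_, fun _ => ?_, fun _ t ht => ?_⟩, .of_forall fun _ => by simp⟩
  · exact isStronglyProgressive_deterministic ℱ ((measurable_const.mul hf).div_const I).neg
  · exact isStronglyProgressive_deterministic ℱ
      ((measurable_const.mul (measurable_intervalIntegral_left hf T)).div_const I)
  · rw [hu]; exact hfi.const_mul _
  · have h0T : (0 : ℝ) ∈ Icc 0 T := ⟨le_rfl, ht.1.trans ht.2⟩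
    have hT : T ∈ Icc 0 T := ⟨h0T.2, le_rfl⟩
    have hsplit := intervalIntegral.integral_add_adjacent_intervals (hsub h0T ht) (hsub ht hT)
    rw [hu, intervalIntegral.integral_const_mul]
    field_simp
    linear_combination ξ * hsplit

section WeightedHolder

variable {α : Type*} [MeasurableSpace α] {μ : Measure α} {p q : ℝ} {η w : α → ℝ}

lemma lintegral_abs_le_weighted_holder (hpq : p.HolderConjugate q) (hη : AEMeasurable η μ)
    (hpos : ∀ᵐ t ∂μ, 0 < η t) (hw : AEMeasurable w μ) :
    ∫⁻ t, ENNReal.ofReal |w t| ∂μ ≤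
      (∫⁻ t, ENNReal.ofReal (η t * |w t| ^ p) ∂μ) ^ (1 / p) *
        (∫⁻ t, ENNReal.ofReal (η t ^ (1 - q)) ∂μ) ^ (1 / q) := by
  have hf : AEMeasurable (fun t => ENNReal.ofReal (η t ^ (1 / p) * |w t|)) μ :=
    ((hη.pow_const _).mul hw.abs).ennreal_ofReal
  have hg : AEMeasurable (fun t => ENNReal.ofReal (η t ^ (-(1 / p)))) μ :=
    (hη.pow_const _).ennreal_ofReal
  calc ∫⁻ t, ENNReal.ofReal |w t| ∂μ
      = ∫⁻ t, ENNReal.ofReal (η t ^ (1 / p) * |w t|) * ENNReal.ofReal (η t ^ (-(1 / p))) ∂μ := by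
        refine lintegral_congr_ae (hpos.mono fun t ht => ?_)
        dsimp only
        rw [← ENNReal.ofReal_mul (by positivity), mul_right_comm, ← Real.rpow_add ht,
          add_neg_cancel, Real.rpow_zero, one_mul]
    _ ≤ _ := ENNReal.lintegral_mul_le_Lp_mul_Lq μ hpq hf hg
    _ = _ := by
        congr 2
        all_goals refine lintegral_congr_ae (hpos.mono fun t ht => ?_); dsimp only
        · rw [ENNReal.ofReal_rpow_of_nonneg (by positivity) hpq.nonneg,
            Real.mul_rpow (by positivity) (abs_nonneg _), ← Real.rpow_mul ht.le,
            one_div_mul_cancel hpq.ne_zero, Real.rpow_one]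
        · rw [ENNReal.ofReal_rpow_of_nonneg (by positivity) hpq.symm.nonneg, ← Real.rpow_mul ht.le]
          congr 2
          linear_combination -hpq.symm.div_conj_eq_sub_one

lemma ofReal_abs_integral_rpow_mul_le (hpq : p.HolderConjugate q) (hη : AEMeasurable η μ)
    (hpos : ∀ᵐ t ∂μ, 0 < η t) (hw : Integrable w μ) :
    ENNReal.ofReal (|∫ t, w t ∂μ| ^ p * (∫ t, η t ^ (1 - q) ∂μ) ^ (1 - p)) ≤
      ∫⁻ t, ENNReal.ofReal (η t * |w t| ^ p) ∂μ := by
  set I := ∫ t, η t ^ (1 - q) ∂μ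
  have hηq_nonneg : 0 ≤ᵐ[μ] fun t => η t ^ (1 - q) := hpos.mono fun t ht => by positivity
  rcases (integral_nonneg_of_ae hηq_nonneg).eq_or_lt with hI | hI
  · rw [show I = 0 from hI.symm, Real.zero_rpow (sub_ne_zero.2 hpq.lt.ne), mul_zero,
      ENNReal.ofReal_zero]
    exact zero_le
  set A := ∫⁻ t, ENNReal.ofReal (η t * |w t| ^ p) ∂μ
  set B := ENNReal.ofReal I
  have hB : ∫⁻ t, ENNReal.ofReal (η t ^ (1 - q)) ∂μ = B :=
    (ofReal_integral_eq_lintegral_ofReal (Integrable.of_integral_ne_zero hI.ne') hηq_nonneg).symm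
  have hB0 : B ≠ 0 := (ENNReal.ofReal_pos.2 hI).ne'
  have hHolder : ENNReal.ofReal |∫ t, w t ∂μ| ≤ A ^ (1 / p) * B ^ (1 / q) := by
    rw [← hB, ← Real.enorm_eq_ofReal_abs]
    refine (enorm_integral_le_lintegral_enorm w).trans ?_
    simp only [Real.enorm_eq_ofReal_abs]
    exact lintegral_abs_le_weighted_holder hpq hη hpos hw.aemeasurable
  calc ENNReal.ofReal (|∫ t, w t ∂μ| ^ p * I ^ (1 - p))
      = ENNReal.ofReal |∫ t, w t ∂μ| ^ p * B ^ (1 - p) := by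
        rw [ENNReal.ofReal_mul (by positivity),
          ENNReal.ofReal_rpow_of_nonneg (abs_nonneg _) hpq.nonneg, ENNReal.ofReal_rpow_of_pos hI]
    _ ≤ (A ^ (1 / p) * B ^ (1 / q)) ^ p * B ^ (1 - p) := by
        gcongr
        exact hpq.nonneg
    _ = A * (B ^ (p / q) * B ^ (1 - p)) := by
        rw [ENNReal.mul_rpow_of_nonneg _ _ hpq.nonneg, ← ENNReal.rpow_mul, ← ENNReal.rpow_mul,
          one_div_mul_cancel hpq.ne_zero, ENNReal.rpow_one, one_div_mul_eq_div, mul_assoc]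
    _ = A := by
        rw [← ENNReal.rpow_add _ _ hB0 ENNReal.ofReal_ne_top, hpq.div_conj_eq_sub_one,
          sub_add_sub_cancel', sub_self, ENNReal.rpow_zero, mul_one]

lemma lintegral_ofReal_mul_abs_const_mul_rpow (hpq : p.HolderConjugate q)
    (hpos : ∀ᵐ t ∂μ, 0 < η t) (hi : Integrable (fun t => η t ^ (1 - q)) μ) (c : ℝ) :
    ∫⁻ t, ENNReal.ofReal (η t * |c * η t ^ (1 - q)| ^ p) ∂μ =
      ENNReal.ofReal (|c| ^ p * ∫ t, η t ^ (1 - q) ∂μ) := by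
  rw [← integral_const_mul, ofReal_integral_eq_lintegral_ofReal (hi.const_mul _)
    (hpos.mono fun t ht => by positivity)]
  refine lintegral_congr_ae (hpos.mono fun t ht => ?_)
  have hexp : 1 + (1 - q) * p = 1 - q := by linear_combination -hpq.mul_eq_add
  have key : η t * η t ^ ((1 - q) * p) = η t ^ (1 - q) := by
    conv_rhs => rw [← hexp, Real.rpow_add ht, Real.rpow_one]
  dsimp only
  rw [abs_mul, abs_of_pos (Real.rpow_pos_of_pos ht _), Real.mul_rpow (abs_nonneg _) (by positivity),
    ← Real.rpow_mul ht.le, mul_left_comm, key]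

end WeightedHolder

lemma cost_deterministic {Ω : Type*} [MeasurableSpace Ω] (P : Measure Ω) [IsProbabilityMeasure P]
    (T p : ℝ) (η x u : ℝ → ℝ) :
    cost P T p (fun t _ => η t) 0 (fun t _ => x t) (fun t _ => u t) =
      ∫⁻ t in Ioc 0 T, ENNReal.ofReal (η t * |u t| ^ p) := by
  simp [cost]

lemma cost_normalized_primitive {Ω : Type*} [MeasurableSpace Ω] (P : Measure Ω)
    [IsProbabilityMeasure P] {T p q ξ : ℝ} (hT : 0 ≤ T) (hpq : p.HolderConjugate q) {η : ℝ → ℝ}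
    (hpos : ∀ s ∈ Ioc 0 T, 0 < η s) (hi : IntegrableOn (fun s => η s ^ (1 - q)) (Ioc 0 T))
    (hI : 0 < ∫ s in (0 : ℝ)..T, η s ^ (1 - q)) (x : ℝ → ℝ) :
    cost P T p (fun t _ => η t) 0 (fun t _ => x t)
        (fun t _ => -(ξ * η t ^ (1 - q) / ∫ s in (0 : ℝ)..T, η s ^ (1 - q))) =
      ENNReal.ofReal (|ξ| ^ p * (∫ s in (0 : ℝ)..T, η s ^ (1 - q)) ^ (1 - p)) := by
  set I := ∫ s in (0 : ℝ)..T, η s ^ (1 - q)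
  have hIoc : ∫ s in Ioc 0 T, η s ^ (1 - q) = I := (intervalIntegral.integral_of_le hT).symm
  have hu : ∀ t, -(ξ * η t ^ (1 - q) / I) = -(ξ / I) * η t ^ (1 - q) := fun t => by ring
  rw [cost_deterministic]
  simp_rw [hu]
  rw [lintegral_ofReal_mul_abs_const_mul_rpow hpq
    ((ae_restrict_iff' measurableSet_Ioc).2 (.of_forall hpos)) hi, hIoc, abs_neg, abs_div,
    abs_of_pos hI, Real.div_rpow (abs_nonneg _) hI.le, Real.rpow_sub hI, Real.rpow_one]
  field_simp

lemma le_cost_of_isAdmissible {Ω : Type*} {m0 : MeasurableSpace Ω} (ℱ : Filtration ℝ m0)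
    (P : Measure Ω) [IsProbabilityMeasure P] {T p q ξ : ℝ} (hT : 0 ≤ T)
    (hpq : p.HolderConjugate q) {η : ℝ → ℝ} (hη : Measurable η) (hpos : ∀ s ∈ Ioc 0 T, 0 < η s)
    {y w : ℝ → Ω → ℝ} (h : IsAdmissible ℱ P T ξ y w) :
    ENNReal.ofReal (|ξ| ^ p * (∫ s in (0 : ℝ)..T, η s ^ (1 - q)) ^ (1 - p)) ≤
      cost P T p (fun t _ => η t) 0 y w := by
  obtain ⟨⟨-, -, hwi, hy⟩, hyT⟩ := h
  have hpos' : ∀ᵐ t ∂volume.restrict (Ioc 0 T), 0 < η t :=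
    (ae_restrict_iff' measurableSet_Ioc).2 (.of_forall hpos)
  calc ENNReal.ofReal (|ξ| ^ p * (∫ s in (0 : ℝ)..T, η s ^ (1 - q)) ^ (1 - p))
      = ∫⁻ _, ENNReal.ofReal (|ξ| ^ p * (∫ s in (0 : ℝ)..T, η s ^ (1 - q)) ^ (1 - p)) ∂P := by
        rw [lintegral_const, measure_univ, mul_one]
    _ ≤ cost P T p (fun t _ => η t) 0 y w := by
        refine lintegral_mono_ae ?_
        filter_upwards [hyT] with ω hω
        have hξ : ∫ t in Ioc 0 T, w t ω = -ξ := by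
          have := hy ω T ⟨hT, le_rfl⟩
          rw [hω, intervalIntegral.integral_of_le hT] at this
          linarith
        have := ofReal_abs_integral_rpow_mul_le hpq hη.aemeasurable hpos'
          ((hwi ω).mono_set Ioc_subset_Icc_self)
        rw [hξ, abs_neg, ← intervalIntegral.integral_of_le hT] at this
        simpa using this

theorem optimal_control_deterministic_eta_general
    {Ω : Type*} {m0 : MeasurableSpace Ω} (P : Measure Ω) [IsProbabilityMeasure P]
    (ℱ : Filtration ℝ m0) (T p q : ℝ) (hT : 0 < T) (hp : 1 < p) (hq : q = p / (p - 1))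
    (η : ℝ → ℝ) (hηmeas : Measurable η)
    (hpos : ∀ s ∈ Set.Icc (0 : ℝ) T, 0 < η s)
    (γ : ℝ → Ω → ℝ) (hγ0 : ∀ t ω, γ t ω = 0)
    (hηq : IntegrableOn (fun s => η s ^ (1 - q)) (Set.Icc 0 T))
    (ξ : ℝ) (x u : ℝ → Ω → ℝ)
    (hxdef : ∀ t ω, x t ω = ξ * (∫ s in t..T, η s ^ (1 - q)) /
      ∫ s in (0 : ℝ)..T, η s ^ (1 - q))
    (hudef : ∀ t ω, u t ω = -(ξ * η t ^ (1 - q) / ∫ s in (0 : ℝ)..T, η s ^ (1 - q))) :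
    IsAdmissible ℱ P T ξ x u ∧
    (∀ y w, IsAdmissible ℱ P T ξ y w →
      cost P T p (fun t _ => η t) γ x u ≤ cost P T p (fun t _ => η t) γ y w) ∧
    cost P T p (fun t _ => η t) γ x u =
      ENNReal.ofReal (|ξ| ^ p * (∫ s in (0 : ℝ)..T, η s ^ (1 - q)) ^ (1 - p)) := by
  obtain rfl : γ = 0 := funext₂ hγ0
  obtain rfl := funext₂ hxdef
  obtain rfl := funext₂ hudef
  have hpq : p.HolderConjugate q := (Real.holderConjugate_iff_eq_conjExponent hp).2 hq
  have hpos' : ∀ s ∈ Ioc 0 T, 0 < η s := fun s hs => hpos s (Ioc_subset_Icc_self hs)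
  have hI : 0 < ∫ s in (0 : ℝ)..T, η s ^ (1 - q) :=
    intervalIntegral.intervalIntegral_pos_of_pos_on
      ((intervalIntegrable_iff_integrableOn_Icc_of_le hT.le).2 hηq)
      (fun s hs => Real.rpow_pos_of_pos (hpos s (Ioo_subset_Icc_self hs)) _) hT
  have hcost := cost_normalized_primitive P (ξ := ξ) hT.le hpq hpos'
    (hηq.mono_set Ioc_subset_Icc_self) hI
    (fun t => ξ * (∫ s in t..T, η s ^ (1 - q)) / ∫ s in (0 : ℝ)..T, η s ^ (1 - q))
  exact ⟨isAdmissible_normalized_primitive ℱ P (hηmeas.pow_const _) hηq hI.ne',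
    fun y w h => hcost.trans_le (le_cost_of_isAdmissible ℱ P hT.le hpq hηmeas hpos' h), hcost⟩

/-- with `γ ≡ 0` and `η` a deterministic measurable positive function with
`∫_0^T η_s^{1-q} ds < ∞` and `∫_0^T η_s^2 ds < ∞`, for every `ξ ∈ ℝ` the deterministic
control `x_t = ξ·(∫_t^T η_s^{1-q} ds)/(∫_0^T η_s^{1-q} ds)` is admissible and optimal, with
`J(x) = |ξ|^p·(∫_0^T η_s^{1-q} ds)^{1-p}`. -/
theorem optimal_control_deterministic_eta
    {Ω : Type*} {m0 : MeasurableSpace Ω} (P : Measure Ω) [IsProbabilityMeasure P]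
    (ℱ : Filtration ℝ m0) (T p q : ℝ) (hT : 0 < T) (hp : 1 < p) (hq : q = p / (p - 1))
    (η : ℝ → ℝ) (hηmeas : Measurable η)
    (hpos : ∀ s ∈ Set.Icc (0 : ℝ) T, 0 < η s)
    (γ : ℝ → Ω → ℝ) (hγ0 : ∀ t ω, γ t ω = 0)
    (hηq : IntegrableOn (fun s => η s ^ (1 - q)) (Set.Icc 0 T))
    (hη2 : IntegrableOn (fun s => (η s) ^ 2) (Set.Icc 0 T))
    (ξ : ℝ) (x u : ℝ → Ω → ℝ)
    (hxdef : ∀ t ω, x t ω = ξ * (∫ s in t..T, η s ^ (1 - q)) /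
      ∫ s in (0 : ℝ)..T, η s ^ (1 - q))
    (hudef : ∀ t ω, u t ω = -(ξ * η t ^ (1 - q) / ∫ s in (0 : ℝ)..T, η s ^ (1 - q))) :
    IsAdmissible ℱ P T ξ x u ∧
    (∀ y w, IsAdmissible ℱ P T ξ y w →
      cost P T p (fun t _ => η t) γ x u ≤ cost P T p (fun t _ => η t) γ y w) ∧
    cost P T p (fun t _ => η t) γ x u =
      ENNReal.ofReal (|ξ| ^ p * (∫ s in (0 : ℝ)..T, η s ^ (1 - q)) ^ (1 - p)) :=
  optimal_control_deterministic_eta_general P ℱ T p q hT hp hq η hηmeas hpos γ hγ0 hηq ξ x u hxdef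
    hudef
end
end

section
/- Let T=1, p=2, β ≥ 1, η_t=(1−t)^β and γ ≡ 0, with initial value ξ=1. Then the infimum of J(x) = E[∫_0^1 (1−t)^β·|u_t|^2 dt] over all admissible controls x ∈ A_0(1) equals 0, yet there exists no admissible control x ∈ A_0(1) with J(x)=0; i.e. the value v=0 is not attained. -/
open MeasureTheory Set
open scoped ENNReal Classical

noncomputable section

/-! The controls `x_t = (1 - t)^ε` are admissible and cost `ε² / (β + 2ε - 1) ≤ ε`, so the
value is `0`. Conversely, on almost every path a control of zero cost has `u = 0` a.e. on `(0, 1)`,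
since the weight `(1 - t)^β` is positive there; such a path stays at `1` and never reaches `0`. -/

lemma isStronglyProgressive_of_stronglyMeasurable {Ω ι E : Type*} {m0 : MeasurableSpace Ω}
    [Preorder ι] [MeasurableSpace ι] [TopologicalSpace E] (ℱ : Filtration ι m0) {f : ι → E}
    (hf : StronglyMeasurable f) : IsStronglyProgressive ℱ (fun t (_ : Ω) => f t) := fun _ =>
  hf.comp_measurable (measurable_subtype_coe.comp measurable_fst)

lemma intervalIntegrable_one_sub_rpow {r : ℝ} (hr : -1 < r) (a b : ℝ) :
    IntervalIntegrable (fun s : ℝ => (1 - s) ^ r) volume a b := by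
  simpa using
    (intervalIntegral.intervalIntegrable_rpow' (a := 1 - a) (b := 1 - b) hr).comp_sub_left 1

lemma integral_one_sub_rpow {r : ℝ} (hr : -1 < r) (t : ℝ) :
    ∫ s in (0 : ℝ)..t, (1 - s) ^ r = (1 - (1 - t) ^ (r + 1)) / (r + 1) := by
  rw [intervalIntegral.integral_comp_sub_left (fun y : ℝ => y ^ r), integral_rpow (Or.inl hr),
    sub_zero, Real.one_rpow]

lemma lintegral_ofReal_one_sub_rpow {r : ℝ} (hr : -1 < r) :
    ∫⁻ t in Ioc (0 : ℝ) 1, ENNReal.ofReal ((1 - t) ^ r) = ENNReal.ofReal (1 / (r + 1)) := by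
  have hint := intervalIntegrable_one_sub_rpow hr 0 1
  rw [intervalIntegrable_iff_integrableOn_Ioc_of_le zero_le_one] at hint
  rw [← ofReal_integral_eq_lintegral_ofReal hint, ← intervalIntegral.integral_of_le zero_le_one,
    integral_one_sub_rpow hr, sub_self, Real.zero_rpow (by linarith), sub_zero]
  filter_upwards [ae_restrict_mem measurableSet_Ioc] with t ht
  exact Real.rpow_nonneg (by linarith [ht.2]) r

section PowerControl

variable {Ω : Type*} {m0 : MeasurableSpace Ω} {ε : ℝ}

lemma isAdmissible_one_sub_rpow (ℱ : Filtration ℝ m0) (P : Measure Ω) (hε : 0 < ε) :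
    IsAdmissible ℱ P 1 1 (fun t _ => (1 - t) ^ ε) (fun t _ => -ε * (1 - t) ^ (ε - 1)) := by
  have hmeas (r : ℝ) : StronglyMeasurable fun t : ℝ => (1 - t) ^ r :=
    ((measurable_const.sub measurable_id).pow_const r).stronglyMeasurable
  refine ⟨⟨?_, ?_, fun _ => ?_, fun _ t _ => ?_⟩, .of_forall fun _ => ?_⟩
  · exact isStronglyProgressive_of_stronglyMeasurable ℱ
      (stronglyMeasurable_const.mul (hmeas (ε - 1)))
  · exact isStronglyProgressive_of_stronglyMeasurable ℱ (hmeas ε)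
  · rw [integrableOn_Icc_iff_integrableOn_Ioc,
      ← intervalIntegrable_iff_integrableOn_Ioc_of_le zero_le_one]
    exact (intervalIntegrable_one_sub_rpow (by linarith) 0 1).const_mul (-ε)
  · rw [intervalIntegral.integral_const_mul, integral_one_sub_rpow (by linarith), sub_add_cancel]
    field_simp
    ring
  · simp [Real.zero_rpow hε.ne']

lemma cost_one_sub_rpow (P : Measure Ω) [IsProbabilityMeasure P] {β : ℝ}
    (hβε : 0 < β + 2 * ε - 1) :
    cost P 1 2 (fun t _ => (1 - t) ^ β) (fun _ _ => 0)
        (fun t _ => (1 - t) ^ ε) (fun t _ => -ε * (1 - t) ^ (ε - 1)) =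
      ENNReal.ofReal (ε ^ 2 / (β + 2 * ε - 1)) := by
  have hpath : ∫⁻ t in Ioc (0 : ℝ) 1, ENNReal.ofReal ((1 - t) ^ β *
        |-ε * (1 - t) ^ (ε - 1)| ^ (2 : ℝ) + 0 * |(1 - t) ^ ε| ^ (2 : ℝ)) =
      ∫⁻ t in Ioc (0 : ℝ) 1, ENNReal.ofReal (ε ^ 2) *
        ENNReal.ofReal ((1 - t) ^ (β + 2 * ε - 2)) := by
    simp_rw [Measure.restrict_congr_set Ioo_ae_eq_Ioc.symm]
    refine setLIntegral_congr_fun measurableSet_Ioo fun t ht => ?_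
    have h1t : 0 < 1 - t := by linarith [ht.2]
    rw [← ENNReal.ofReal_mul (sq_nonneg ε), Real.rpow_two, sq_abs, zero_mul, add_zero,
      show β + 2 * ε - 2 = β + (ε - 1) + (ε - 1) by ring, Real.rpow_add h1t, Real.rpow_add h1t]
    congr 1
    ring
  unfold cost
  simp_rw [hpath, lintegral_const_mul' _ _ ENNReal.ofReal_ne_top,
    lintegral_ofReal_one_sub_rpow (show -1 < β + 2 * ε - 2 by linarith), lintegral_const,
    measure_univ, mul_one, ← ENNReal.ofReal_mul (sq_nonneg ε)]
  rw [show β + 2 * ε - 2 + 1 = β + 2 * ε - 1 by ring, mul_one_div]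

end PowerControl

section ZeroCost

variable {Ω E : Type*} {m0 : MeasurableSpace Ω} {ℱ : Filtration ℝ m0}

lemma IsStronglyProgressive.measurable_uncurry_min [TopologicalSpace E]
    [TopologicalSpace.PseudoMetrizableSpace E] [MeasurableSpace E] [BorelSpace E]
    {f : ℝ → Ω → E} (hf : IsStronglyProgressive ℱ f) (T : ℝ) :
    Measurable fun q : Ω × ℝ => f (min q.2 T) q.1 := by
  have hle : Subtype.instMeasurableSpace.prod (ℱ T) ≤
      (Subtype.instMeasurableSpace.prod m0 : MeasurableSpace (Iic T × Ω)) :=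
    sup_le_sup le_rfl (MeasurableSpace.comap_mono (ℱ.le T))
  have hclamp : Measurable fun q : Ω × ℝ =>
      ((⟨min q.2 T, mem_Iic.mpr (min_le_right _ _)⟩ : Iic T), q.1) :=
    (measurable_snd.min measurable_const).subtype_mk.prodMk measurable_fst
  exact ((hf T).mono hle).measurable.comp hclamp

lemma intervalIntegral_eq_zero_of_lintegral_cost_eq_zero {T p : ℝ} {η γ x u : ℝ → ℝ}
    (hT : 0 ≤ T) (hp : p ≠ 0) (hη : ∀ t ∈ Ioo 0 T, 0 < η t) (hγ : ∀ t, 0 ≤ γ t)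
    (hmeas : AEMeasurable (fun t => ENNReal.ofReal (η t * |u t| ^ p + γ t * |x t| ^ p))
      (volume.restrict (Ioc 0 T)))
    (hzero : ∫⁻ t in Ioc 0 T, ENNReal.ofReal (η t * |u t| ^ p + γ t * |x t| ^ p) = 0) :
    ∫ t in 0..T, u t = 0 := by
  rw [lintegral_eq_zero_iff' hmeas, Measure.restrict_congr_set Ioo_ae_eq_Ioc.symm] at hzero
  rw [intervalIntegral.integral_of_le hT, Measure.restrict_congr_set Ioo_ae_eq_Ioc.symm]
  refine integral_eq_zero_of_ae ?_
  filter_upwards [hzero, ae_restrict_mem measurableSet_Ioo] with t ht htT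
  have hu : η t * |u t| ^ p ≤ 0 := by
    have hγx : 0 ≤ γ t * |x t| ^ p := mul_nonneg (hγ t) (by positivity)
    linarith [ENNReal.ofReal_eq_zero.mp ht]
  have hu' : |u t| ^ p = 0 :=
    le_antisymm (nonpos_of_mul_nonpos_right hu (hη t htT)) (by positivity)
  simpa [Real.rpow_eq_zero (abs_nonneg _) hp] using hu'

theorem IsControl.ae_eq_initial_of_cost_eq_zero {P : Measure Ω} {T ξ p : ℝ}
    {η γ x u : ℝ → Ω → ℝ} (hx : IsControl ℱ T ξ x u) (hT : 0 ≤ T) (hp : p ≠ 0)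
    (hη : IsStronglyProgressive ℱ η) (hγ : IsStronglyProgressive ℱ γ)
    (hη_pos : ∀ t ∈ Ioo 0 T, ∀ ω, 0 < η t ω) (hγ_nonneg : ∀ t ω, 0 ≤ γ t ω)
    (hzero : cost P T p η γ x u = 0) :
    ∀ᵐ ω ∂P, x T ω = ξ := by
  obtain ⟨hu_prog, hx_prog, -, hxu⟩ := hx
  set F : Ω × ℝ → ℝ≥0∞ := fun q => ENNReal.ofReal
    (η (min q.2 T) q.1 * |u (min q.2 T) q.1| ^ p + γ (min q.2 T) q.1 * |x (min q.2 T) q.1| ^ p)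
  have hF : Measurable F := ENNReal.measurable_ofReal.comp <|
    ((IsStronglyProgressive.measurable_uncurry_min hη T).mul
        ((IsStronglyProgressive.measurable_uncurry_min hu_prog T).abs.pow_const p)).add
      ((IsStronglyProgressive.measurable_uncurry_min hγ T).mul
        ((IsStronglyProgressive.measurable_uncurry_min hx_prog T).abs.pow_const p))
  have hF_eq (ω : Ω) : ∀ᵐ t ∂volume.restrict (Ioc 0 T), F (ω, t) =
      ENNReal.ofReal (η t ω * |u t ω| ^ p + γ t ω * |x t ω| ^ p) := by
    filter_upwards [ae_restrict_mem measurableSet_Ioc] with t ht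
    simp only [F, min_eq_left ht.2]
  have hpath_meas : Measurable fun ω => ∫⁻ t in Ioc 0 T,
      ENNReal.ofReal (η t ω * |u t ω| ^ p + γ t ω * |x t ω| ^ p) := by
    simpa only [lintegral_congr_ae (hF_eq _)] using
      hF.lintegral_prod_right' (ν := volume.restrict (Ioc 0 T))
  filter_upwards [(lintegral_eq_zero_iff hpath_meas).mp hzero] with ω hω
  rw [hxu ω T ⟨hT, le_rfl⟩, intervalIntegral_eq_zero_of_lintegral_cost_eq_zero hT hp
    (fun t ht => hη_pos t ht ω) (fun t => hγ_nonneg t ω)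
    ((hF.comp measurable_prodMk_left).aemeasurable.congr (hF_eq ω)) hω, add_zero]

end ZeroCost

/-- for `T = 1`, `p = 2`, `β ≥ 1`, `η_t = (1−t)^β`, `γ ≡ 0` and initial
value `ξ = 1`, the infimum of `J` over admissible controls equals `0`, but no admissible
control attains it. -/
theorem value_zero_not_attained
    {Ω : Type*} {m0 : MeasurableSpace Ω} (P : Measure Ω) [IsProbabilityMeasure P]
    (ℱ : Filtration ℝ m0) (β : ℝ) (hβ : 1 ≤ β) :
    sInf {c : ℝ≥0∞ | ∃ x u, IsAdmissible ℱ P 1 1 x u ∧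
        c = cost P 1 2 (fun t _ => (1 - t) ^ β) (fun _ _ => 0) x u} = 0 ∧
    ¬ ∃ x u, IsAdmissible ℱ P 1 1 x u ∧
        cost P 1 2 (fun t _ => (1 - t) ^ β) (fun _ _ => 0) x u = 0 := by
  constructor
  · refine le_antisymm (le_of_forall_gt fun c hc => ?_) bot_le
    obtain ⟨ε, -, hε_pos, hεc⟩ := ENNReal.lt_iff_exists_real_btwn.mp hc
    have hε : 0 < ε := ENNReal.ofReal_pos.mp hε_pos
    refine lt_of_le_of_lt ?_ hεc
    calc sInf _ ≤ _ := sInf_le (by exact ⟨_, _, isAdmissible_one_sub_rpow ℱ P hε, rfl⟩)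
      _ = ENNReal.ofReal (ε ^ 2 / (β + 2 * ε - 1)) := cost_one_sub_rpow P (by linarith)
      _ ≤ ENNReal.ofReal ε :=
        ENNReal.ofReal_le_ofReal (by rw [div_le_iff₀ (by linarith)]; nlinarith)
  · rintro ⟨x, u, ⟨hx, hx_end⟩, hzero⟩
    have hη : IsStronglyProgressive ℱ fun t (_ : Ω) => (1 - t) ^ β :=
      isStronglyProgressive_of_stronglyMeasurable ℱ
        ((measurable_const.sub measurable_id).pow_const β).stronglyMeasurable
    have hx_stays := hx.ae_eq_initial_of_cost_eq_zero zero_le_one two_ne_zero hη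
      (isStronglyProgressive_const ℱ 0)
      (fun t ht _ => Real.rpow_pos_of_pos (by linarith [ht.2]) β) (fun _ _ => le_rfl) hzero
    obtain ⟨ω, hω_end, hω_stays⟩ := (hx_end.and hx_stays).exists
    exact one_ne_zero (hω_stays.symm.trans hω_end)
end
end

section
/- Let T=1, p=2, 0 ≤ β < 1, η_t=(1−t)^β and γ ≡ 0, with initial value ξ=1. Then the deterministic control x_t=(1−t)^{1−β} is admissible and optimal: J(x) ≤ J(y) for every admissible control y ∈ A_0(1). -/
open MeasureTheory Set
open scoped ENNReal Classical

noncomputable section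

/-! Along each path, `∫₀¹ w = x₁ - x₀ = -1`, so by Cauchy–Schwarz with the weight `(1-t)^β`,
`1 ≤ (∫₀¹ |w|)² ≤ (∫₀¹ (1-t)^β w²) · ∫₀¹ (1-t)^{-β} = (∫₀¹ (1-t)^β w²) / (1-β)`.
Hence every admissible control costs at least `1-β` pathwise, and `x_t = (1-t)^{1-β}` attains
this bound: its derivative is proportional to the inverse weight, the equality case. -/

section WeightedCauchySchwarz

variable {α : Type*} [MeasurableSpace α] {μ : Measure α} {f ρ : α → ℝ}

theorem sq_lintegral_abs_le_lintegral_mul_sq_mul_lintegral_inv (hf : AEMeasurable f μ)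
    (hρ : AEMeasurable ρ μ) (hρ_pos : ∀ᵐ a ∂μ, 0 < ρ a) :
    (∫⁻ a, ENNReal.ofReal |f a| ∂μ) ^ 2 ≤
      (∫⁻ a, ENNReal.ofReal (ρ a * f a ^ 2) ∂μ) * ∫⁻ a, ENNReal.ofReal (ρ a)⁻¹ ∂μ := by
  set g₁ : α → ℝ≥0∞ := fun a => ENNReal.ofReal (√(ρ a) * |f a|)
  set g₂ : α → ℝ≥0∞ := fun a => ENNReal.ofReal (√(ρ a))⁻¹
  have hg₁ : AEMeasurable g₁ μ := (hρ.sqrt.mul hf.abs).ennreal_ofReal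
  have hg₂ : AEMeasurable g₂ μ := hρ.sqrt.inv.ennreal_ofReal
  have h_factor : (fun a => ENNReal.ofReal |f a|) =ᵐ[μ] g₁ * g₂ := by
    filter_upwards [hρ_pos] with a ha
    have : √(ρ a) ≠ 0 := (Real.sqrt_pos.2 ha).ne'
    simp only [g₁, g₂, Pi.mul_apply]
    rw [← ENNReal.ofReal_mul (by positivity)]
    field_simp
  have hg₁_sq : ∀ᵐ a ∂μ, g₁ a ^ (2 : ℝ) = ENNReal.ofReal (ρ a * f a ^ 2) := by
    filter_upwards [hρ_pos] with a ha
    rw [ENNReal.ofReal_rpow_of_nonneg (by positivity) zero_le_two, Real.rpow_two, mul_pow,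
      Real.sq_sqrt ha.le, sq_abs]
  have hg₂_sq : ∀ᵐ a ∂μ, g₂ a ^ (2 : ℝ) = ENNReal.ofReal (ρ a)⁻¹ := by
    filter_upwards [hρ_pos] with a ha
    rw [ENNReal.ofReal_rpow_of_nonneg (by positivity) zero_le_two, Real.rpow_two, inv_pow,
      Real.sq_sqrt ha.le]
  have holder := ENNReal.lintegral_mul_le_Lp_mul_Lq μ Real.HolderConjugate.two_two hg₁ hg₂
  rw [← lintegral_congr_ae h_factor, lintegral_congr_ae hg₁_sq,
    lintegral_congr_ae hg₂_sq] at holder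
  calc _ ≤ (_ ^ (1 / 2 : ℝ) * _ ^ (1 / 2 : ℝ)) ^ 2 := by gcongr
    _ = _ := by
      rw [← ENNReal.mul_rpow_of_nonneg _ _ (by norm_num), ← ENNReal.rpow_natCast,
        ← ENNReal.rpow_mul]
      norm_num

theorem ofReal_sq_integral_le_lintegral_mul_sq_mul_lintegral_inv (hf : AEMeasurable f μ)
    (hρ : AEMeasurable ρ μ) (hρ_pos : ∀ᵐ a ∂μ, 0 < ρ a) :
    ENNReal.ofReal ((∫ a, f a ∂μ) ^ 2) ≤
      (∫⁻ a, ENNReal.ofReal (ρ a * f a ^ 2) ∂μ) * ∫⁻ a, ENNReal.ofReal (ρ a)⁻¹ ∂μ := by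
  have h_abs : ENNReal.ofReal |∫ a, f a ∂μ| ≤ ∫⁻ a, ENNReal.ofReal |f a| ∂μ :=
    ENNReal.ofReal_le_of_le_toReal (norm_integral_le_lintegral_norm f)
  calc ENNReal.ofReal ((∫ a, f a ∂μ) ^ 2) = ENNReal.ofReal |∫ a, f a ∂μ| ^ 2 := by
        rw [← ENNReal.ofReal_pow (abs_nonneg _), sq_abs]
    _ ≤ (∫⁻ a, ENNReal.ofReal |f a| ∂μ) ^ 2 := by gcongr
    _ ≤ _ := sq_lintegral_abs_le_lintegral_mul_sq_mul_lintegral_inv hf hρ hρ_pos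

end WeightedCauchySchwarz

theorem ae_restrict_Ioc_mem_Ioo {a b : ℝ} : ∀ᵐ t ∂volume.restrict (Ioc a b), t ∈ Ioo a b := by
  rw [← Measure.restrict_congr_set Ioo_ae_eq_Ioc]
  exact ae_restrict_mem measurableSet_Ioo

section PowerWeight

variable {β : ℝ}

theorem intervalIntegrable_one_sub_rpow_neg (hβ : β < 1) :
    IntervalIntegrable (fun s : ℝ => (1 - s) ^ (-β)) volume 0 1 := by
  simpa using ((intervalIntegral.intervalIntegrable_rpow' (r := -β) (a := 0) (b := 1)
    (by linarith)).comp_sub_left (1 : ℝ)).symm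

theorem integral_one_sub_rpow_neg (hβ : β < 1) (t : ℝ) :
    ∫ s in (0 : ℝ)..t, (1 - s) ^ (-β) = (1 - (1 - t) ^ (1 - β)) / (1 - β) := by
  rw [intervalIntegral.integral_comp_sub_left (fun s : ℝ => s ^ (-β)), sub_zero,
    integral_rpow (Or.inl (by linarith)), neg_add_eq_sub, Real.one_rpow]

theorem lintegral_Ioc_one_sub_rpow_neg (hβ : β < 1) :
    ∫⁻ t in Ioc (0 : ℝ) 1, ENNReal.ofReal ((1 - t) ^ (-β)) = ENNReal.ofReal (1 - β)⁻¹ := by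
  rw [← ofReal_integral_eq_lintegral_ofReal
    ((intervalIntegrable_iff_integrableOn_Ioc_of_le zero_le_one).1
      (intervalIntegrable_one_sub_rpow_neg hβ))]
  · rw [← intervalIntegral.integral_of_le zero_le_one, integral_one_sub_rpow_neg hβ, sub_self,
      Real.zero_rpow (by linarith), sub_zero, one_div]
  · filter_upwards [ae_restrict_mem measurableSet_Ioc] with t ht
    exact Real.rpow_nonneg (by linarith [ht.2]) _

theorem ofReal_mul_sq_integral_le_lintegral_one_sub_rpow_mul_sq (hβ : β < 1) {f : ℝ → ℝ}
    (hf : AEMeasurable f (volume.restrict (Ioc 0 1))) :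
    ENNReal.ofReal ((1 - β) * (∫ t in Ioc (0 : ℝ) 1, f t) ^ 2) ≤
      ∫⁻ t in Ioc (0 : ℝ) 1, ENNReal.ofReal ((1 - t) ^ β * f t ^ 2) := by
  have hβ' : 0 < 1 - β := by linarith
  have h_inv : ∫⁻ t in Ioc (0 : ℝ) 1, ENNReal.ofReal ((1 - t) ^ β)⁻¹ =
      ENNReal.ofReal (1 - β)⁻¹ := by
    rw [← lintegral_Ioc_one_sub_rpow_neg hβ]
    refine setLIntegral_congr_fun measurableSet_Ioc fun t ht => ?_
    rw [Real.rpow_neg (by linarith [ht.2])]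
  have h_cs := ofReal_sq_integral_le_lintegral_mul_sq_mul_lintegral_inv hf
    (by fun_prop : Measurable fun t : ℝ => (1 - t) ^ β).aemeasurable
    (ae_restrict_Ioc_mem_Ioo.mono fun t ht => Real.rpow_pos_of_pos (by linarith [ht.2]) β)
  rw [h_inv] at h_cs
  calc ENNReal.ofReal ((1 - β) * (∫ t in Ioc (0 : ℝ) 1, f t) ^ 2)
      ≤ (∫⁻ t in Ioc (0 : ℝ) 1, ENNReal.ofReal ((1 - t) ^ β * f t ^ 2)) *
          ENNReal.ofReal (1 - β)⁻¹ * ENNReal.ofReal (1 - β) := by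
        rw [ENNReal.ofReal_mul hβ'.le, mul_comm]
        gcongr
    _ = _ := by
        rw [mul_assoc, ← ENNReal.ofReal_mul (by positivity), inv_mul_cancel₀ hβ'.ne',
          ENNReal.ofReal_one, mul_one]

theorem lintegral_Ioc_power_control_energy (hβ : β < 1) :
    ∫⁻ t in Ioc (0 : ℝ) 1, ENNReal.ofReal ((1 - t) ^ β * (-((1 - β) * (1 - t) ^ (-β))) ^ 2) =
      ENNReal.ofReal (1 - β) := by
  have hβ' : 0 < 1 - β := by linarith
  have h_pointwise : ∀ᵐ t ∂volume.restrict (Ioc (0 : ℝ) 1),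
      ENNReal.ofReal ((1 - t) ^ β * (-((1 - β) * (1 - t) ^ (-β))) ^ 2) =
        ENNReal.ofReal ((1 - β) ^ 2) * ENNReal.ofReal ((1 - t) ^ (-β)) := by
    filter_upwards [ae_restrict_Ioc_mem_Ioo] with t ht
    have ht' : 0 < 1 - t := by linarith [ht.2]
    have hρ : 0 < (1 - t) ^ β := Real.rpow_pos_of_pos ht' β
    rw [← ENNReal.ofReal_mul (by positivity), Real.rpow_neg ht'.le]
    congr 1
    field_simp
  rw [lintegral_congr_ae h_pointwise, lintegral_const_mul' _ _ ENNReal.ofReal_ne_top,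
    lintegral_Ioc_one_sub_rpow_neg hβ, ← ENNReal.ofReal_mul (by positivity), sq,
    mul_assoc, mul_inv_cancel₀ hβ'.ne', mul_one]

end PowerWeight

theorem Measurable.isStronglyProgressive {Ω : Type*} {m0 : MeasurableSpace Ω}
    {f : ℝ → ℝ} (hf : Measurable f) (ℱ : Filtration ℝ m0) :
    IsStronglyProgressive ℱ fun t (_ : Ω) => f t := fun _ =>
  (hf.comp (measurable_subtype_coe.comp measurable_fst)).stronglyMeasurable

theorem cost_two_zero {Ω : Type*} [MeasurableSpace Ω] (P : Measure Ω) (T : ℝ)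
    (η : ℝ → Ω → ℝ) (x u : ℝ → Ω → ℝ) :
    cost P T 2 η (fun _ _ => 0) x u =
      ∫⁻ ω, (∫⁻ t in Ioc (0 : ℝ) T, ENNReal.ofReal (η t ω * u t ω ^ 2)) ∂P := by
  simp only [cost, Real.rpow_two, sq_abs, zero_mul, add_zero]

theorem IsAdmissible.ae_integral_eq_neg {Ω : Type*} {m0 : MeasurableSpace Ω}
    {ℱ : Filtration ℝ m0} {P : Measure Ω} {T ξ : ℝ} {x u : ℝ → Ω → ℝ}
    (h : IsAdmissible ℱ P T ξ x u) (hT : 0 ≤ T) :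
    ∀ᵐ ω ∂P, ∫ s in (0 : ℝ)..T, u s ω = -ξ := by
  filter_upwards [h.2] with ω hω
  have := h.1.2.2.2 ω T ⟨hT, le_rfl⟩
  linarith

theorem isAdmissible_power_control {Ω : Type*} {m0 : MeasurableSpace Ω} (ℱ : Filtration ℝ m0)
    (P : Measure Ω) {β : ℝ} (hβ : β < 1) :
    IsAdmissible ℱ P 1 1 (fun t _ => (1 - t) ^ (1 - β))
      (fun t _ => -((1 - β) * (1 - t) ^ (-β))) := by
  refine ⟨⟨(by fun_prop : Measurable _).isStronglyProgressive ℱ,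
    (by fun_prop : Measurable _).isStronglyProgressive ℱ, fun _ => ?_, fun _ t _ => ?_⟩,
    ae_of_all _ fun _ => ?_⟩
  · exact (intervalIntegrable_iff_integrableOn_Icc_of_le zero_le_one).1
      ((intervalIntegrable_one_sub_rpow_neg hβ).const_mul _).neg
  · rw [intervalIntegral.integral_neg, intervalIntegral.integral_const_mul,
      integral_one_sub_rpow_neg hβ]
    field_simp [(by linarith : 1 - β ≠ 0)]
    ring
  · simp [Real.zero_rpow (by linarith : 1 - β ≠ 0)]

theorem power_control_optimal_general
    {Ω : Type*} {m0 : MeasurableSpace Ω} (P : Measure Ω)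
    (ℱ : Filtration ℝ m0) (β : ℝ) (hβ1 : β < 1)
    (x u : ℝ → Ω → ℝ)
    (hxdef : ∀ t ω, x t ω = (1 - t) ^ (1 - β))
    (hudef : ∀ t ω, u t ω = -((1 - β) * (1 - t) ^ (-β))) :
    IsAdmissible ℱ P 1 1 x u ∧
    ∀ y w, IsAdmissible ℱ P 1 1 y w →
      cost P 1 2 (fun t _ => (1 - t) ^ β) (fun _ _ => 0) x u ≤
        cost P 1 2 (fun t _ => (1 - t) ^ β) (fun _ _ => 0) y w := by
  obtain rfl : x = fun t _ => (1 - t) ^ (1 - β) := funext₂ hxdef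
  obtain rfl : u = fun t _ => -((1 - β) * (1 - t) ^ (-β)) := funext₂ hudef
  refine ⟨isAdmissible_power_control ℱ P hβ1, fun y w hy => ?_⟩
  rw [cost_two_zero, cost_two_zero]
  simp only [lintegral_Ioc_power_control_energy hβ1]
  refine lintegral_mono_ae ?_
  filter_upwards [hy.ae_integral_eq_neg zero_le_one] with ω hω
  have hw : AEMeasurable (fun t => w t ω) (volume.restrict (Ioc 0 1)) :=
    ((hy.1.2.2.1 ω).mono_set Ioc_subset_Icc_self).aemeasurable
  calc ENNReal.ofReal (1 - β)
      = ENNReal.ofReal ((1 - β) * (∫ t in Ioc (0 : ℝ) 1, w t ω) ^ 2) := by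
        rw [← intervalIntegral.integral_of_le zero_le_one, hω]; norm_num
    _ ≤ _ := ofReal_mul_sq_integral_le_lintegral_one_sub_rpow_mul_sq hβ1 hw

/-- for `T = 1`, `p = 2`, `0 ≤ β < 1`, `η_t = (1−t)^β`, `γ ≡ 0` and initial
value `ξ = 1`, the deterministic control `x_t = (1−t)^{1−β}` (with derivative
`u_t = −(1−β)(1−t)^{−β}`) is admissible and optimal. -/
theorem power_control_optimal
    {Ω : Type*} {m0 : MeasurableSpace Ω} (P : Measure Ω) [IsProbabilityMeasure P]
    (ℱ : Filtration ℝ m0) (β : ℝ) (hβ0 : 0 ≤ β) (hβ1 : β < 1)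
    (x u : ℝ → Ω → ℝ)
    (hxdef : ∀ t ω, x t ω = (1 - t) ^ (1 - β))
    (hudef : ∀ t ω, u t ω = -((1 - β) * (1 - t) ^ (-β))) :
    IsAdmissible ℱ P 1 1 x u ∧
    ∀ y w, IsAdmissible ℱ P 1 1 y w →
      cost P 1 2 (fun t _ => (1 - t) ^ β) (fun _ _ => 0) x u ≤
        cost P 1 2 (fun t _ => (1 - t) ^ β) (fun _ _ => 0) y w :=
  power_control_optimal_general P ℱ β hβ1 x u hxdef hudef
end
end

section
/- Let μ ∈ ℝ with μ ≠ 0 and assume γ ≡ 0. Let η be a positive progressively measurable process satisfying E[η_t | F_s] = η_s·e^{μ(t−s)} a.s. for all 0≤s≤t≤T (as is the case for a geometric Brownian motion with drift μ), together with E[∫_0^T η_t^2 dt] < ∞, E[∫_0^T η_t^{1-q} dt] < ∞ and E[η_T^2] < ∞. Then for every initial value ξ ∈ ℝ the deterministic control x_t = ξ·(e^{−μ(q−1)t} − e^{−μ(q−1)T})/(1 − e^{−μ(q−1)T}) is admissible and optimal: J(x) ≤ J(y) for every admissible control y ∈ A_0(ξ). -/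
open MeasureTheory Set
open scoped ENNReal Classical

noncomputable section

open Function

/-!
Put `a = μ(q-1)`, so that `a(p-1) = μ`, and write the candidate's derivative as `u_t = c e^{-at}`.
Then the marginal cost `p η_t |u_t|^{p-1} sign u_t` is a constant multiple of `Z_t = η_t e^{-μt}`,
and the drift condition on `η` says exactly that `Z` is a martingale on `[0,T]` closed by `Z_T`.
Convexity of `|·|^p` gives, pointwise, `η|w|^p ≥ η|u|^p + C·Z·(w - u)` for any competitor `w`.
The correction term has zero mean: for the adapted process `v = w - u`, Fubini and
`E[Z_T | F_t] = Z_t` give `E ∫ Z_t v_t dt = E[Z_T ∫ v_t dt] = 0`, since both controls steer `ξ`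
to `0`. The nonnegative form of the same identity, `E ∫ Z_t |v_t| dt = E[Z_T ∫ |v_t| dt]`,
provides the integrability of `η` and of `Z_T v` on `(0,T] × Ω` that these manipulations need.
-/

lemma abs_rpow_add_mul_sign_mul_sub_le {p : ℝ} (hp : 1 < p) (z b : ℝ) :
    |z| ^ p + p * |z| ^ (p - 1) * (SignType.sign z * (b - z)) ≤ |b| ^ p := by
  have young := Real.young_inequality_of_nonneg (Real.rpow_nonneg (abs_nonneg z) (p - 1))
    (abs_nonneg b) (Real.HolderConjugate.conjExponent hp).symm
  have hpow : (|z| ^ (p - 1)) ^ Real.conjExponent p = |z| ^ p := by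
    rw [← Real.rpow_mul (abs_nonneg z), Real.conjExponent]
    congr 1
    field_simp [show p - 1 ≠ 0 by linarith]
  have hmul : |z| ^ (p - 1) * |z| = |z| ^ p := by
    rw [← Real.rpow_add_one' (abs_nonneg z) (by linarith), sub_add_cancel]
  have hsign : (SignType.sign z : ℝ) * (b - z) ≤ |b| - |z| := by
    rcases lt_trichotomy z 0 with hz | rfl | hz
    · simp [hz, abs_of_neg hz]; linarith [neg_abs_le b]
    · simp
    · simp [hz, abs_of_pos hz, le_abs_self]
  rw [hpow, Real.conjExponent, div_div_eq_mul_div] at young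
  calc |z| ^ p + p * |z| ^ (p - 1) * (SignType.sign z * (b - z))
      ≤ |z| ^ p + p * |z| ^ (p - 1) * (|b| - |z|) := by gcongr
    _ = p * (|z| ^ (p - 1) * |b|) - (p - 1) * |z| ^ p := by rw [← hmul]; ring
    _ ≤ |b| ^ p := by
      field_simp at young
      linarith

lemma abs_mul_exp_rpow_add_le {p a μ : ℝ} (hp : 1 < p) (haμ : a * (p - 1) = μ) (c t b : ℝ) :
    |c * Real.exp (-(a * t))| ^ p
      + p * |c| ^ (p - 1) * SignType.sign c * (Real.exp (-(μ * t)) * (b - c * Real.exp (-(a * t))))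
      ≤ |b| ^ p := by
  have hpow : |c * Real.exp (-(a * t))| ^ (p - 1) = |c| ^ (p - 1) * Real.exp (-(μ * t)) := by
    rw [abs_mul, Real.abs_exp, Real.mul_rpow (abs_nonneg c) (Real.exp_pos _).le, ← Real.exp_mul,
      ← haμ]
    ring_nf
  have hsign : SignType.sign (c * Real.exp (-(a * t))) = SignType.sign c := by
    rw [sign_mul, sign_pos (Real.exp_pos _), mul_one]
  have := abs_rpow_add_mul_sign_mul_sub_le hp (c * Real.exp (-(a * t))) b
  rw [hpow, hsign] at this
  linarith

lemma abs_le_one_add_abs_rpow {p : ℝ} (hp : 1 ≤ p) (r : ℝ) : |r| ≤ 1 + |r| ^ p := by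
  rcases le_total |r| 1 with hr | hr
  · linarith [Real.rpow_nonneg (abs_nonneg r) p]
  · linarith [Real.self_le_rpow_of_one_le hr hp]

lemma MeasureTheory.Integrable.mul_of_integrable_mul_abs_rpow_s14 {X : Type*} [MeasurableSpace X]
    {ρ : Measure X} {p : ℝ} (hp : 1 ≤ p) {η w : X → ℝ} (hη : Integrable η ρ) (hη0 : ∀ z, 0 ≤ η z)
    (hw : AEStronglyMeasurable w ρ) (hηw : Integrable (fun z => η z * |w z| ^ p) ρ) :
    Integrable (fun z => η z * w z) ρ := by
  refine (hη.add hηw).mono' (hη.1.mul hw) (ae_of_all _ fun z => ?_)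
  rw [Pi.add_apply, Real.norm_eq_abs, abs_mul, abs_of_nonneg (hη0 z)]
  nlinarith [mul_le_mul_of_nonneg_left (abs_le_one_add_abs_rpow hp (w z)) (hη0 z)]

lemma lintegral_ofReal_le_of_add_mul_le {X : Type*} [MeasurableSpace X] {ρ : Measure X}
    {U G W : X → ℝ} (hU : Integrable U ρ) (hU0 : ∀ z, 0 ≤ U z) (hW : Integrable W ρ)
    (hW0 : ∀ z, 0 ≤ W z) (hG : Integrable G ρ) (hG0 : ∫ z, G z ∂ρ = 0) (C : ℝ)
    (hle : ∀ z, U z + C * G z ≤ W z) :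
    ∫⁻ z, ENNReal.ofReal (U z) ∂ρ ≤ ∫⁻ z, ENNReal.ofReal (W z) ∂ρ := by
  rw [← ofReal_integral_eq_lintegral_ofReal hU (ae_of_all _ hU0),
    ← ofReal_integral_eq_lintegral_ofReal hW (ae_of_all _ hW0)]
  refine ENNReal.ofReal_le_ofReal ?_
  have := integral_mono (hU.add (hG.const_mul C)) hW hle
  rwa [integral_add' hU (hG.const_mul C), integral_const_mul, hG0, mul_zero, add_zero] at this

lemma lintegral_mul_ofReal_eq_of_condExp_ae_eq {Ω : Type*} {m m0 : MeasurableSpace Ω}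
    (hm : m ≤ m0) {P : Measure Ω} [IsFiniteMeasure P] {f h : Ω → ℝ} (hf : Integrable f P)
    (hf0 : 0 ≤ᵐ[P] f) (hfh : P[f|m] =ᵐ[P] h) {g : Ω → ℝ≥0∞} (hg : Measurable[m] g) :
    ∫⁻ ω, g ω * ENNReal.ofReal (f ω) ∂P = ∫⁻ ω, g ω * ENNReal.ofReal (h ω) ∂P := by
  have hh : Integrable h P := integrable_condExp.congr hfh
  have hh0 : 0 ≤ᵐ[P] h := by
    filter_upwards [condExp_nonneg hf0 (m := m), hfh] with ω h1 h2
    rwa [← h2]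
  have hdens : ∀ k : Ω → ℝ, Integrable k P →
      ∫⁻ ω, g ω * ENNReal.ofReal (k ω) ∂P
        = ∫⁻ ω, g ω ∂(P.withDensity fun ω => ENNReal.ofReal (k ω)) := fun k hk => by
    rw [lintegral_withDensity_eq_lintegral_mul₀' hk.aemeasurable.ennreal_ofReal
      (hg.mono hm le_rfl).aemeasurable]
    simp_rw [Pi.mul_apply, mul_comm]
  -- The densities `f` and `h` integrate alike over `m`-measurable sets, and `g` only sees `m`.
  have htrim : (P.withDensity fun ω => ENNReal.ofReal (f ω)).trim hm
      = (P.withDensity fun ω => ENNReal.ofReal (h ω)).trim hm := by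
    refine @Measure.ext Ω m _ _ fun s hs => ?_
    rw [trim_measurableSet_eq hm hs, trim_measurableSet_eq hm hs,
      withDensity_apply _ (hm _ hs), withDensity_apply _ (hm _ hs),
      ← ofReal_integral_eq_lintegral_ofReal hf.integrableOn (ae_restrict_of_ae hf0),
      ← ofReal_integral_eq_lintegral_ofReal hh.integrableOn (ae_restrict_of_ae hh0),
      ← setIntegral_condExp hm hf hs, setIntegral_congr_ae (hm _ hs) (hfh.mono fun ω h _ => h)]
  rw [hdens f hf, hdens h hh, ← lintegral_trim hm hg, ← lintegral_trim hm hg, htrim]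

lemma integral_mul_eq_of_condExp_ae_eq {Ω : Type*} {m m0 : MeasurableSpace Ω} (hm : m ≤ m0)
    {P : Measure Ω} [IsFiniteMeasure P] {f h v : Ω → ℝ} (hv : StronglyMeasurable[m] v)
    (hvf : Integrable (fun ω => v ω * f ω) P) (hf : Integrable f P) (hfh : P[f|m] =ᵐ[P] h) :
    ∫ ω, v ω * f ω ∂P = ∫ ω, v ω * h ω ∂P := by
  rw [← integral_condExp hm]
  refine integral_congr_ae ?_
  filter_upwards [condExp_mul_of_stronglyMeasurable_left hv hvf hf, hfh] with ω h1 h2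
  exact h1.trans (by rw [Pi.mul_apply, h2])

lemma MeasureTheory.IsStronglyProgressive.aestronglyMeasurable_uncurry {Ω β : Type*}
    {m0 : MeasurableSpace Ω} [TopologicalSpace β] {ℱ : Filtration ℝ m0} {v : ℝ → Ω → β}
    (hv : IsStronglyProgressive ℱ v) {T : ℝ} {ν : Measure ℝ} (hν : ∀ᵐ t ∂ν, t ≤ T)
    (P : Measure Ω) :
    AEStronglyMeasurable (uncurry v) (ν.prod P) := by
  -- For `t ≤ T`, `v t ω = v (min t T) ω`, and the latter is measurable by progressivity at `T`.
  have hclamp : @Measurable (ℝ × Ω) (Iic T × Ω) _ (Subtype.instMeasurableSpace.prod (ℱ T))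
      fun st => (⟨min st.1 T, mem_Iic.2 (min_le_right _ _)⟩, st.2) :=
    (measurable_fst.min measurable_const).subtype_mk.prodMk (measurable_snd.mono le_rfl (ℱ.le T))
  refine ⟨_, (hv T).comp_measurable hclamp, ?_⟩
  filter_upwards [Measure.quasiMeasurePreserving_fst.ae hν] with st hst
  simp [min_eq_left hst, uncurry_def]

section

variable {Ω : Type*} {m0 : MeasurableSpace Ω} {P : Measure Ω} {ℱ : Filtration ℝ m0} {T ξ : ℝ}

local notation "ρ" => Measure.prod (volume.restrict (Ioc (0 : ℝ) T)) P

lemma isStronglyProgressive_of_continuous {f : ℝ → ℝ} (hf : Continuous f) :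
    IsStronglyProgressive ℱ (fun t (_ : Ω) => f t) :=
  StronglyAdapted.isStronglyProgressive_of_continuous (fun _ => stronglyMeasurable_const)
    fun _ => hf

lemma isAdmissible_exp (ℱ : Filtration ℝ m0) (P : Measure Ω) {a : ℝ} (ha : a ≠ 0) (hT : 0 < T)
    (ξ : ℝ) :
    IsAdmissible ℱ P T ξ
      (fun t _ => ξ * (Real.exp (-(a * t)) - Real.exp (-(a * T))) / (1 - Real.exp (-(a * T))))
      (fun t _ => -(ξ * a * Real.exp (-(a * t)) / (1 - Real.exp (-(a * T))))) := by
  have hD : 1 - Real.exp (-(a * T)) ≠ 0 := by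
    rw [sub_ne_zero, ne_comm, Ne, Real.exp_eq_one_iff, neg_eq_zero]
    exact mul_ne_zero ha hT.ne'
  have hu : Continuous fun t => -(ξ * a * Real.exp (-(a * t)) / (1 - Real.exp (-(a * T)))) := by
    fun_prop
  have hx : ∀ s, HasDerivAt
      (fun t => ξ * (Real.exp (-(a * t)) - Real.exp (-(a * T))) / (1 - Real.exp (-(a * T))))
      (-(ξ * a * Real.exp (-(a * s)) / (1 - Real.exp (-(a * T))))) s := fun s => by
    have hlin : HasDerivAt (fun t => -(a * t)) (-a) s := by
      simpa only [mul_one] using ((hasDerivAt_id' s).const_mul a).fun_neg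
    exact (((hlin.exp.sub_const (Real.exp (-(a * T)))).const_mul ξ).div_const
      (1 - Real.exp (-(a * T)))).congr_deriv (by ring)
  refine ⟨⟨isStronglyProgressive_of_continuous hu, isStronglyProgressive_of_continuous
    (continuous_iff_continuousAt.2 fun s => (hx s).continuousAt), fun _ => hu.integrableOn_Icc,
    fun _ t _ => ?_⟩, ae_of_all _ fun _ => by simp⟩
  rw [intervalIntegral.integral_eq_sub_of_hasDerivAt (fun s _ => hx s) (hu.intervalIntegrable 0 t)]
  field_simp
  simp

lemma IsAdmissible.setIntegral_deriv_eq_neg {x u : ℝ → Ω → ℝ} (h : IsAdmissible ℱ P T ξ x u)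
    (hT : 0 ≤ T) : ∀ᵐ ω ∂P, ∫ t in Ioc 0 T, u t ω = -ξ := by
  filter_upwards [h.2] with ω hω
  have hxT := h.1.2.2.2 ω T ⟨hT, le_rfl⟩
  rw [← intervalIntegral.integral_of_le hT]
  linarith

lemma IsAdmissible.setIntegral_sub_eq_zero {x u y w : ℝ → Ω → ℝ}
    (hxu : IsAdmissible ℱ P T ξ x u) (hyw : IsAdmissible ℱ P T ξ y w) (hT : 0 ≤ T) :
    ∀ᵐ ω ∂P, ∫ t in Ioc 0 T, (w t ω - u t ω) = 0 := by
  filter_upwards [hyw.setIntegral_deriv_eq_neg hT, hxu.setIntegral_deriv_eq_neg hT]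
    with ω hwω huω
  rw [integral_sub ((hyw.1.2.2.1 ω).mono_set Ioc_subset_Icc_self)
    ((hxu.1.2.2.1 ω).mono_set Ioc_subset_Icc_self), hwω, huω, sub_self]

lemma ae_fst_mem_Ioc : ∀ᵐ st ∂ρ, st.1 ∈ Ioc 0 T :=
  Measure.quasiMeasurePreserving_fst.ae (ae_restrict_mem measurableSet_Ioc)

lemma MeasureTheory.Integrable.continuous_fst_mul {F : ℝ × Ω → ℝ} (hF : Integrable F ρ)
    {ψ : ℝ → ℝ} (hψ : Continuous ψ) :
    Integrable (fun st => ψ st.1 * F st) ρ := by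
  obtain ⟨C, hC⟩ := (isCompact_Icc : IsCompact (Icc 0 T)).exists_bound_of_continuousOn
    hψ.continuousOn
  refine hF.bdd_mul (c := C) (hψ.measurable.comp measurable_fst).aestronglyMeasurable ?_
  filter_upwards [ae_fst_mem_Ioc] with st hst using hC _ (Ioc_subset_Icc_self hst)

lemma MeasureTheory.IsStronglyProgressive.aestronglyMeasurable_uncurry_Ioc {β : Type*}
    [TopologicalSpace β] {v : ℝ → Ω → β} (hv : IsStronglyProgressive ℱ v) :
    AEStronglyMeasurable (uncurry v) ρ :=
  hv.aestronglyMeasurable_uncurry ((ae_restrict_mem measurableSet_Ioc).mono fun _ ht => ht.2) P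

lemma MeasureTheory.IsStronglyProgressive.aestronglyMeasurable_mul_abs_rpow {η u : ℝ → Ω → ℝ}
    (hη : IsStronglyProgressive ℱ η) (hu : IsStronglyProgressive ℱ u) (p : ℝ) :
    AEStronglyMeasurable (fun st : ℝ × Ω => η st.1 st.2 * |u st.1 st.2| ^ p) ρ :=
  hη.aestronglyMeasurable_uncurry_Ioc.mul
    (hu.norm.aestronglyMeasurable_uncurry_Ioc.aemeasurable.pow_const p).aestronglyMeasurable

lemma cost_zero_eq_lintegral_prod [SFinite P] {η : ℝ → Ω → ℝ} (hη : IsStronglyProgressive ℱ η)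
    {p : ℝ} {x u : ℝ → Ω → ℝ} (hu : IsStronglyProgressive ℱ u) :
    cost P T p η (fun _ _ => 0) x u
      = ∫⁻ st, ENNReal.ofReal (η st.1 st.2 * |u st.1 st.2| ^ p) ∂ρ := by
  simp only [cost, zero_mul, add_zero]
  exact (lintegral_prod_symm _
    (hη.aestronglyMeasurable_mul_abs_rpow hu p).aemeasurable.ennreal_ofReal).symm

lemma condExp_mul_exp_terminal {μ : ℝ} {η : ℝ → Ω → ℝ} {s : ℝ}
    (hcond : P[η T|ℱ s] =ᵐ[P] fun ω => η s ω * Real.exp (μ * (T - s))) :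
    P[fun ω => η T ω * Real.exp (-(μ * T))|ℱ s] =ᵐ[P] fun ω => η s ω * Real.exp (-(μ * s)) := by
  have hsmul : (fun ω => η T ω * Real.exp (-(μ * T))) = Real.exp (-(μ * T)) • η T := by
    ext ω
    simp [mul_comm]
  rw [hsmul]
  filter_upwards [condExp_smul (Real.exp (-(μ * T))) (η T) (ℱ s), hcond] with ω hsmulω hω
  rw [hsmulω, Pi.smul_apply, hω, smul_eq_mul, mul_left_comm, ← Real.exp_add]
  ring_nf

variable [IsFiniteMeasure P] {Z : ℝ → Ω → ℝ}

lemma lintegral_prod_terminal_mul_abs_eq (hZ : IsStronglyProgressive ℱ Z)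
    (hZ0 : ∀ t ω, 0 ≤ Z t ω) (hZT : Integrable (Z T) P)
    (hZmart : ∀ t ∈ Ioc 0 T, P[Z T|ℱ t] =ᵐ[P] Z t) {v : ℝ → Ω → ℝ}
    (hv : IsStronglyProgressive ℱ v) :
    ∫⁻ st, ENNReal.ofReal (Z T st.2 * |v st.1 st.2|) ∂ρ
      = ∫⁻ st, ENNReal.ofReal (Z st.1 st.2 * |v st.1 st.2|) ∂ρ := by
  have hv' : AEStronglyMeasurable (uncurry fun t ω => ‖v t ω‖) ρ :=
    hv.norm.aestronglyMeasurable_uncurry_Ioc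
  have hT : AEMeasurable (fun st : ℝ × Ω => ENNReal.ofReal (Z T st.2 * |v st.1 st.2|)) ρ :=
    (hZT.1.comp_snd.mul hv').aemeasurable.ennreal_ofReal
  have ht : AEMeasurable (fun st : ℝ × Ω => ENNReal.ofReal (Z st.1 st.2 * |v st.1 st.2|)) ρ :=
    (hZ.aestronglyMeasurable_uncurry_Ioc.mul hv').aemeasurable.ennreal_ofReal
  rw [lintegral_prod _ hT, lintegral_prod _ ht]
  refine setLIntegral_congr_fun measurableSet_Ioc fun t ht => ?_
  simp_rw [ENNReal.ofReal_mul (hZ0 _ _), mul_comm (ENNReal.ofReal (Z _ _))]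
  exact lintegral_mul_ofReal_eq_of_condExp_ae_eq (ℱ.le t) hZT (ae_of_all _ (hZ0 T))
    (hZmart t ht) (hv.norm.stronglyAdapted t).measurable.ennreal_ofReal

lemma integrable_uncurry_of_condExp_terminal (hZ : IsStronglyProgressive ℱ Z)
    (hZ0 : ∀ t ω, 0 ≤ Z t ω) (hZT : Integrable (Z T) P)
    (hZmart : ∀ t ∈ Ioc 0 T, P[Z T|ℱ t] =ᵐ[P] Z t) :
    Integrable (uncurry Z) ρ := by
  refine ⟨hZ.aestronglyMeasurable_uncurry_Ioc, ?_⟩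
  have h := lintegral_prod_terminal_mul_abs_eq hZ hZ0 hZT hZmart (isStronglyProgressive_const ℱ 1)
  simp only [abs_one, mul_one] at h
  show HasFiniteIntegral (fun st : ℝ × Ω => Z st.1 st.2) _
  rw [hasFiniteIntegral_iff_ofReal (ae_of_all _ fun _ => hZ0 _ _), ← h]
  exact (hasFiniteIntegral_iff_ofReal (ae_of_all _ fun _ => hZ0 _ _)).1 (hZT.comp_snd _).2

lemma integral_prod_mul_eq_zero (hZ : IsStronglyProgressive ℱ Z)
    (hZ0 : ∀ t ω, 0 ≤ Z t ω) (hZT : Integrable (Z T) P)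
    (hZmart : ∀ t ∈ Ioc 0 T, P[Z T|ℱ t] =ᵐ[P] Z t) {v : ℝ → Ω → ℝ}
    (hv : IsStronglyProgressive ℱ v)
    (hZv : Integrable (fun st => Z st.1 st.2 * v st.1 st.2) ρ)
    (hv0 : ∀ᵐ ω ∂P, ∫ t in Ioc 0 T, v t ω = 0) :
    ∫ st, Z st.1 st.2 * v st.1 st.2 ∂ρ = 0 := by
  have hnorm : ∀ s t ω, ‖Z s ω * v t ω‖ = Z s ω * |v t ω| := fun s t ω => by
    rw [Real.norm_eq_abs, abs_mul, abs_of_nonneg (hZ0 s ω)]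
  have hZTv : Integrable (fun st : ℝ × Ω => Z T st.2 * v st.1 st.2) ρ := by
    refine ⟨hZT.1.comp_snd.mul (hv.aestronglyMeasurable_uncurry_Ioc), ?_⟩
    have hfin := hZv.2
    rw [hasFiniteIntegral_iff_norm] at hfin ⊢
    simp only [hnorm] at hfin ⊢
    rwa [lintegral_prod_terminal_mul_abs_eq hZ hZ0 hZT hZmart hv]
  calc ∫ st, Z st.1 st.2 * v st.1 st.2 ∂ρ
      = ∫ t in Ioc 0 T, ∫ ω, Z t ω * v t ω ∂P := integral_prod _ hZv
    _ = ∫ t in Ioc 0 T, ∫ ω, Z T ω * v t ω ∂P := by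
        refine integral_congr_ae ?_
        filter_upwards [hZTv.prod_right_ae, ae_restrict_mem measurableSet_Ioc] with t hZTvt ht
        simp_rw [mul_comm (Z _ _)]
        refine (integral_mul_eq_of_condExp_ae_eq (ℱ.le t) (hv.stronglyAdapted t) ?_ hZT
          (hZmart t ht)).symm
        simpa only [mul_comm] using hZTvt
    _ = ∫ ω, Z T ω * (∫ t in Ioc 0 T, v t ω) ∂P := by
        rw [integral_integral_swap (f := fun t ω => Z T ω * v t ω) hZTv]
        simp_rw [integral_const_mul]
    _ = 0 := integral_eq_zero_of_ae (by filter_upwards [hv0] with ω hω; simp [hω])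

lemma integrable_uncurry_of_condExp_eq_mul_exp {μ : ℝ} {η : ℝ → Ω → ℝ}
    (hη : IsStronglyProgressive ℱ η) (hη0 : ∀ t ω, 0 ≤ η t ω) (hηT : Integrable (η T) P)
    (hcond : ∀ t ∈ Ioc 0 T, P[η T|ℱ t] =ᵐ[P] fun ω => η t ω * Real.exp (μ * (T - t))) :
    Integrable (uncurry η) ρ := by
  have hZ := integrable_uncurry_of_condExp_terminal
    (hη.mul (isStronglyProgressive_of_continuous (f := fun t => Real.exp (-(μ * t))) (by fun_prop)))
    (fun t ω => mul_nonneg (hη0 t ω) (Real.exp_pos _).le) (hηT.mul_const _)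
    fun t ht => condExp_mul_exp_terminal (hcond t ht)
  convert hZ.continuous_fst_mul (ψ := fun t => Real.exp (μ * t)) (by fun_prop) using 2 with ⟨t, ω⟩
  simp only [uncurry_apply_pair, mul_left_comm _ (η t ω), ← Real.exp_add, add_neg_cancel,
    Real.exp_zero, mul_one]

lemma integral_mul_exp_mul_eq_zero {μ : ℝ} {η : ℝ → Ω → ℝ}
    (hη : IsStronglyProgressive ℱ η) (hη0 : ∀ t ω, 0 ≤ η t ω) (hηT : Integrable (η T) P)
    (hcond : ∀ t ∈ Ioc 0 T, P[η T|ℱ t] =ᵐ[P] fun ω => η t ω * Real.exp (μ * (T - t)))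
    {v : ℝ → Ω → ℝ} (hv : IsStronglyProgressive ℱ v)
    (hηv : Integrable (fun st => η st.1 st.2 * Real.exp (-(μ * st.1)) * v st.1 st.2) ρ)
    (hv0 : ∀ᵐ ω ∂P, ∫ t in Ioc 0 T, v t ω = 0) :
    ∫ st, η st.1 st.2 * Real.exp (-(μ * st.1)) * v st.1 st.2 ∂ρ = 0 :=
  integral_prod_mul_eq_zero (Z := fun t ω => η t ω * Real.exp (-(μ * t)))
    (hη.mul (isStronglyProgressive_of_continuous (by fun_prop)))
    (fun t ω => mul_nonneg (hη0 t ω) (Real.exp_pos _).le) (hηT.mul_const _)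
    (fun t ht => condExp_mul_exp_terminal (hcond t ht)) hv hηv hv0

lemma cost_le_of_deriv_eq_mul_exp {p μ a c : ℝ} (hp : 1 < p)
    (haμ : a * (p - 1) = μ) (hT : 0 ≤ T) {η : ℝ → Ω → ℝ} (hη : IsStronglyProgressive ℱ η)
    (hη0 : ∀ t ω, 0 ≤ η t ω) (hηT : Integrable (η T) P)
    (hcond : ∀ t ∈ Ioc 0 T, P[η T|ℱ t] =ᵐ[P] fun ω => η t ω * Real.exp (μ * (T - t)))
    {x u y w : ℝ → Ω → ℝ} (hu : ∀ t ω, u t ω = c * Real.exp (-(a * t)))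
    (hxu : IsAdmissible ℱ P T ξ x u) (hyw : IsAdmissible ℱ P T ξ y w) :
    cost P T p η (fun _ _ => 0) x u ≤ cost P T p η (fun _ _ => 0) y w := by
  rw [cost_zero_eq_lintegral_prod hη hxu.1.1, cost_zero_eq_lintegral_prod hη hyw.1.1]
  rcases eq_top_or_lt_top (∫⁻ st, ENNReal.ofReal (η st.1 st.2 * |w st.1 st.2| ^ p) ∂ρ)
    with htop | hfin
  · exact htop ▸ le_top
  have hηint := integrable_uncurry_of_condExp_eq_mul_exp hη hη0 hηT hcond
  have hnonneg : ∀ v : ℝ → Ω → ℝ, ∀ st : ℝ × Ω, 0 ≤ η st.1 st.2 * |v st.1 st.2| ^ p :=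
    fun _ _ => mul_nonneg (hη0 _ _) (Real.rpow_nonneg (abs_nonneg _) _)
  have hW : Integrable (fun st => η st.1 st.2 * |w st.1 st.2| ^ p) ρ :=
    ⟨hη.aestronglyMeasurable_mul_abs_rpow hyw.1.1 p,
      (hasFiniteIntegral_iff_ofReal (ae_of_all _ (hnonneg w))).2 hfin⟩
  have hU : Integrable (fun st => η st.1 st.2 * |u st.1 st.2| ^ p) ρ := by
    convert hηint.continuous_fst_mul (ψ := fun t => |c * Real.exp (-(a * t))| ^ p)
      ((by fun_prop : Continuous _).rpow_const fun _ => Or.inr (by linarith)) using 2 with ⟨t, ω⟩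
    rw [hu, uncurry_apply_pair, mul_comm]
  have hG : Integrable
      (fun st => η st.1 st.2 * Real.exp (-(μ * st.1)) * (w st.1 st.2 - u st.1 st.2)) ρ := by
    have hηw := hηint.mul_of_integrable_mul_abs_rpow_s14 hp.le (fun _ => hη0 _ _)
      hyw.1.1.aestronglyMeasurable_uncurry_Ioc hW
    convert (hηw.continuous_fst_mul (ψ := fun t => Real.exp (-(μ * t))) (by fun_prop)).sub
      (hηint.continuous_fst_mul (ψ := fun t => Real.exp (-(μ * t)) * (c * Real.exp (-(a * t))))
        (by fun_prop)) using 2 with ⟨t, ω⟩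
    simp only [Pi.sub_apply, uncurry_apply_pair, hu]
    ring
  refine lintegral_ofReal_le_of_add_mul_le hU (hnonneg u) hW (hnonneg w) hG
    (integral_mul_exp_mul_eq_zero hη hη0 hηT hcond (IsStronglyProgressive.sub hyw.1.1 hxu.1.1) hG
      (hxu.setIntegral_sub_eq_zero hyw hT)) (p * |c| ^ (p - 1) * SignType.sign c) fun ⟨t, ω⟩ => ?_
  have := mul_le_mul_of_nonneg_left (abs_mul_exp_rpow_add_le hp haμ c t (w t ω)) (hη0 t ω)
  simp only [hu] at this ⊢
  linarith

end

theorem optimal_control_geometric_brownian_motion_general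
    {Ω : Type*} {m0 : MeasurableSpace Ω} (P : Measure Ω) [IsProbabilityMeasure P]
    (ℱ : Filtration ℝ m0) (T p q : ℝ) (hT : 0 < T) (hp : 1 < p) (hq : q = p / (p - 1))
    (μ : ℝ) (hμ : μ ≠ 0)
    (η γ : ℝ → Ω → ℝ) (hηprog : ProgMeasurable ℱ η)
    (hγ0 : ∀ t ω, γ t ω = 0)
    (hpos : ∀ t ω, 0 < η t ω)
    (hint : ∀ t, 0 ≤ t → t ≤ T → Integrable (η t) P)
    (hcond : ∀ s t, 0 ≤ s → s ≤ t → t ≤ T →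
      P[η t | ℱ s] =ᵐ[P] fun ω => η s ω * Real.exp (μ * (t - s)))
    (ξ : ℝ) (x u : ℝ → Ω → ℝ)
    (hxdef : ∀ t ω, x t ω =
      ξ * (Real.exp (-(μ * (q - 1) * t)) - Real.exp (-(μ * (q - 1) * T))) /
        (1 - Real.exp (-(μ * (q - 1) * T))))
    (hudef : ∀ t ω, u t ω =
      -(ξ * (μ * (q - 1)) * Real.exp (-(μ * (q - 1) * t)) /
        (1 - Real.exp (-(μ * (q - 1) * T))))) :
    IsAdmissible ℱ P T ξ x u ∧
    ∀ y w, IsAdmissible ℱ P T ξ y w → cost P T p η γ x u ≤ cost P T p η γ y w := by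
  have hp1 : p - 1 ≠ 0 := by linarith
  have hq1 : q - 1 = (p - 1)⁻¹ := by rw [hq]; field_simp; ring
  have ha : μ * (q - 1) ≠ 0 := mul_ne_zero hμ (by rw [hq1]; exact inv_ne_zero hp1)
  have haμ : μ * (q - 1) * (p - 1) = μ := by rw [hq1, mul_assoc, inv_mul_cancel₀ hp1, mul_one]
  obtain rfl : x = _ := funext fun t => funext (hxdef t)
  obtain rfl : u = _ := funext fun t => funext (hudef t)
  obtain rfl : γ = fun _ _ => 0 := funext fun t => funext (hγ0 t)
  have hadm := isAdmissible_exp ℱ P ha hT ξ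
  refine ⟨hadm, fun y w hyw => cost_le_of_deriv_eq_mul_exp hp haμ hT.le hηprog
    (fun t ω => (hpos t ω).le) (hint T hT.le le_rfl) (fun t ht => hcond t T ht.1.le ht.2 le_rfl)
    (c := -(ξ * (μ * (q - 1)) / (1 - Real.exp (-(μ * (q - 1) * T))))) (fun t ω => by ring)
    hadm hyw⟩

/-- with `γ ≡ 0`, `μ ≠ 0` and `η` positive, progressively measurable with
`E[η_t | F_s] = η_s·e^{μ(t−s)}` (e.g. a geometric Brownian motion with drift `μ`) and the
stated integrability conditions, for every `ξ ∈ ℝ` the deterministic control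
`x_t = ξ·(e^{−μ(q−1)t} − e^{−μ(q−1)T})/(1 − e^{−μ(q−1)T})` is admissible and optimal. -/
theorem optimal_control_geometric_brownian_motion
    {Ω : Type*} {m0 : MeasurableSpace Ω} (P : Measure Ω) [IsProbabilityMeasure P]
    (ℱ : Filtration ℝ m0) (T p q : ℝ) (hT : 0 < T) (hp : 1 < p) (hq : q = p / (p - 1))
    (μ : ℝ) (hμ : μ ≠ 0)
    (η γ : ℝ → Ω → ℝ) (hηprog : ProgMeasurable ℱ η)
    (hγ0 : ∀ t ω, γ t ω = 0)
    (hpos : ∀ t ω, 0 < η t ω)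
    (hint : ∀ t, 0 ≤ t → t ≤ T → Integrable (η t) P)
    (hcond : ∀ s t, 0 ≤ s → s ≤ t → t ≤ T →
      P[η t | ℱ s] =ᵐ[P] fun ω => η s ω * Real.exp (μ * (t - s)))
    (hη2 : ∫⁻ ω, (∫⁻ t in Set.Ioc (0 : ℝ) T, ENNReal.ofReal ((η t ω) ^ 2)) ∂P < ⊤)
    (hηq : ∫⁻ ω, (∫⁻ t in Set.Ioc (0 : ℝ) T, ENNReal.ofReal (η t ω ^ (1 - q))) ∂P < ⊤)
    (hηT : ∫⁻ ω, ENNReal.ofReal ((η T ω) ^ 2) ∂P < ⊤)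
    (ξ : ℝ) (x u : ℝ → Ω → ℝ)
    (hxdef : ∀ t ω, x t ω =
      ξ * (Real.exp (-(μ * (q - 1) * t)) - Real.exp (-(μ * (q - 1) * T))) /
        (1 - Real.exp (-(μ * (q - 1) * T))))
    (hudef : ∀ t ω, u t ω =
      -(ξ * (μ * (q - 1)) * Real.exp (-(μ * (q - 1) * t)) /
        (1 - Real.exp (-(μ * (q - 1) * T))))) :
    IsAdmissible ℱ P T ξ x u ∧
    ∀ y w, IsAdmissible ℱ P T ξ y w → cost P T p η γ x u ≤ cost P T p η γ y w :=
  optimal_control_geometric_brownian_motion_general P ℱ T p q hT hp hq μ hμ η γ hηprog hγ0 hpos hint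
    hcond ξ x u hxdef hudef
end
end
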